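/- arXiv:1906.09629 — 12 statements merged into one kernel-verified Lean document; each statement's English description precedes it below -/
import Mathlib

section
/- For every integer n ≥ 1 and every complex number s with Re s > 0, the improper integral ∫_0^∞ t^{-n} · ( e^{-st} - P_n(s,t) · e^{-t} ) dt converges and equals (-1)^n · ( s^{n-1}/(n-1)! · Log s + B_n(s) ), where Log denotes the principal branch of the complex logarithm. -/
/-!
Write `n = m + 1`. Taylor's formula with integral remainder, applied to `e^{(1-s)t}`, turns the
integrand into `(1-s)^{m+1}/m! · ∫₀¹ (1-u)^m e^{-(1+(s-1)u)t} du`. The kernel is dominated by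
`e^{-min(Re s, 1) t}`, so Fubini applies, and the `t`-integral equals `(1-u)^m / (1+(s-1)u)`.
Substituting `w = 1 + (s-1)u`, the remaining `u`-integral is `∫₁ˢ (s-w)^m / w dw`, whose
primitive `s^m log w + ∑ⱼ s^{m-1-j} (s-w)^{j+1}/(j+1)` is elementary. Its value at `w = 1` is a
polynomial in `s`, and comparing the recursions in `m` satisfied by it and by `B (m+1)` identifies
the two.
-/

open Finset Polynomial MeasureTheory

/-- The polynomials `B n ∈ ℚ[X]`: `B 1 = 0` and, for `n ≥ 1`,
`B (n+1) (s) = -(1/n!) ∑_{k=1}^n binom(n,k) (H_n - H_{n-k}) (s-1)^k`. -/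
noncomputable def B : ℕ → Polynomial ℚ
  | 0 => 0
  | n + 1 =>
      Polynomial.C (-(n.factorial : ℚ)⁻¹) *
        ∑ k ∈ Finset.Icc 1 n,
          Polynomial.C ((n.choose k : ℚ) * (harmonic n - harmonic (n - k))) *
            (Polynomial.X - 1) ^ k

open scoped Nat

-- `C(m,k) (H_m - H_{m-k})` is `∂/∂m C(m,k)`: this is Pascal's rule differentiated in `m`.
theorem choose_mul_harmonic_sub_succ {m k : ℕ} (hk : k < m) :
    ((m + 1).choose (k + 1) : ℚ) * (harmonic (m + 1) - harmonic (m - k)) =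
      m.choose (k + 1) * (harmonic m - harmonic (m - (k + 1))) +
        m.choose k * (harmonic m - harmonic (m - k)) := by
  obtain ⟨r, rfl⟩ : ∃ r, m = k + 1 + r := ⟨m - (k + 1), by omega⟩
  have hpascal : ((k + 1 + r + 1).choose (k + 1) : ℚ) =
      (k + 1 + r).choose k + (k + 1 + r).choose (k + 1) := by
    exact_mod_cast Nat.choose_succ_succ' (k + 1 + r) k
  have hscale : ((k + 1 + r).choose (k + 1) : ℚ) * (k + 1 + r + 1) =
      (k + 1 + r + 1).choose (k + 1) * (r + 1) := by
    have := Nat.choose_mul_succ_eq (k + 1 + r) (k + 1)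
    rw [show k + 1 + r + 1 - (k + 1) = r + 1 by omega] at this
    exact_mod_cast this
  rw [show k + 1 + r - k = r + 1 by omega, show k + 1 + r - (k + 1) = r by omega,
    harmonic_succ, harmonic_succ]
  push_cast
  field_simp
  linear_combination
    ((harmonic (k + 1 + r) - harmonic r) * (r + 1) - 1) * (k + 1 + r + 1) * hpascal - hscale

theorem sum_choose_mul_harmonic_succ {K : Type*} [Field K] [CharZero K] (m : ℕ) (x : K) :
    ∑ k ∈ range (m + 1 + 1),
        (((m + 1).choose k * (harmonic (m + 1) - harmonic (m + 1 - k)) : ℚ) : K) * x ^ k =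
      (x + 1) * ∑ k ∈ range (m + 1),
          ((m.choose k * (harmonic m - harmonic (m - k)) : ℚ) : K) * x ^ k +
        x ^ (m + 1) / (m + 1) := by
  have hpascal : ∑ k ∈ range (m + 1 + 1),
        (((m + 1).choose k * (harmonic (m + 1) - harmonic (m + 1 - k)) : ℚ) : K) * x ^ k =
      ∑ k ∈ range m, ((m.choose (k + 1) * (harmonic m - harmonic (m - (k + 1))) : ℚ) : K) *
          x ^ (k + 1) +
        ∑ k ∈ range m, ((m.choose k * (harmonic m - harmonic (m - k)) : ℚ) : K) * x ^ (k + 1) +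
          (harmonic (m + 1) : K) * x ^ (m + 1) := by
    rw [sum_range_succ', sum_range_succ, ← sum_add_distrib]
    simp only [Nat.add_sub_add_right, Nat.sub_self, Nat.choose_self, Nat.choose_zero_right,
      Nat.sub_zero, sub_self, mul_zero, Rat.cast_zero, zero_mul, add_zero]
    congr 1
    · refine sum_congr rfl fun k hk => ?_
      rw [choose_mul_harmonic_sub_succ (mem_range.mp hk)]
      push_cast
      ring
    · simp
  have hshift : ∑ k ∈ range (m + 1),
        ((m.choose k * (harmonic m - harmonic (m - k)) : ℚ) : K) * x ^ k =
      ∑ k ∈ range m, ((m.choose (k + 1) * (harmonic m - harmonic (m - (k + 1))) : ℚ) : K) *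
        x ^ (k + 1) := by
    simp [sum_range_succ']
  have hmul : x * ∑ k ∈ range (m + 1),
        ((m.choose k * (harmonic m - harmonic (m - k)) : ℚ) : K) * x ^ k =
      ∑ k ∈ range m, ((m.choose k * (harmonic m - harmonic (m - k)) : ℚ) : K) * x ^ (k + 1) +
        (harmonic m : K) * x ^ (m + 1) := by
    simp only [sum_range_succ _ m, mul_add, mul_sum, Nat.choose_self, Nat.sub_self,
      harmonic_zero]
    push_cast
    congr 1
    · exact sum_congr rfl fun k _ => by ring
    · ring
  have hH : (harmonic (m + 1) : K) = harmonic m + 1 / (m + 1) := by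
    rw [harmonic_succ]; push_cast; ring
  rw [hpascal, hH]
  linear_combination -hmul - hshift

theorem sum_pow_mul_sub_one_pow_div_eq_sum_choose_mul_harmonic {K : Type*} [Field K] [CharZero K]
    (m : ℕ) (s : K) :
    ∑ j ∈ range m, s ^ (m - 1 - j) * (s - 1) ^ (j + 1) / (j + 1) =
      ∑ k ∈ range (m + 1),
        ((m.choose k * (harmonic m - harmonic (m - k)) : ℚ) : K) * (s - 1) ^ k := by
  induction m with
  | zero => simp
  | succ m ih =>
    have hsucc : ∑ j ∈ range (m + 1), s ^ (m + 1 - 1 - j) * (s - 1) ^ (j + 1) / (j + 1) =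
        s * ∑ j ∈ range m, s ^ (m - 1 - j) * (s - 1) ^ (j + 1) / (j + 1) +
          (s - 1) ^ (m + 1) / (m + 1) := by
      rw [sum_range_succ, mul_sum]
      congr 1
      · refine sum_congr rfl fun j hj => ?_
        rw [show m + 1 - 1 - j = m - 1 - j + 1 by grind]
        ring
      · simp
    rw [hsucc, ih, sum_choose_mul_harmonic_succ, sub_add_cancel]

theorem aeval_B_succ {K : Type*} [Field K] [CharZero K] (m : ℕ) (s : K) :
    aeval s (B (m + 1)) =
      -(m ! : K)⁻¹ * ∑ j ∈ range m, s ^ (m - 1 - j) * (s - 1) ^ (j + 1) / (j + 1) := by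
  rw [sum_pow_mul_sub_one_pow_div_eq_sum_choose_mul_harmonic, range_eq_Ico,
    sum_eq_sum_Ico_succ_bot (Nat.succ_pos m), zero_add, Nat.succ_eq_add_one,
    Ico_add_one_right_eq_Icc]
  simp [B, map_sum]

theorem hasDerivAt_sum_range_pow_div_factorial {𝕜 : Type*} [RCLike 𝕜] (n : ℕ) (y : 𝕜) :
    HasDerivAt (fun y => ∑ k ∈ range (n + 1), y ^ k / (k ! : 𝕜))
      (∑ k ∈ range (n + 1), y ^ k / (k ! : 𝕜) - y ^ n / (n ! : 𝕜)) y := by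
  induction n with
  | zero => simpa using hasDerivAt_const y (1 : 𝕜)
  | succ n ih =>
    simp_rw [sum_range_succ _ (n + 1)]
    refine (ih.add ((hasDerivAt_pow (n + 1) y).div_const ((n + 1)! : 𝕜))).congr_deriv ?_
    rw [Nat.factorial_succ, Nat.add_sub_cancel]
    push_cast
    field_simp
    ring

/-- The `u`-derivative of `exp (w * u) * ∑ k ≤ n, (w * (1 - u)) ^ k / k !` telescopes to the
integrand. -/
theorem Complex.exp_sub_sum_range_eq_integral (w : ℂ) (n : ℕ) :
    exp w - ∑ k ∈ range (n + 1), w ^ k / (k ! : ℂ) =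
      w ^ (n + 1) / n ! * ∫ u in (0 : ℝ)..1, (1 - (u : ℂ)) ^ n * exp (w * u) := by
  have hderiv : ∀ u ∈ Set.uIcc (0 : ℝ) 1, HasDerivAt
      (fun u : ℝ => exp (w * u) * ∑ k ∈ range (n + 1), (w * (1 - u)) ^ k / (k ! : ℂ))
      (w ^ (n + 1) / n ! * ((1 - (u : ℂ)) ^ n * exp (w * u))) u := by
    intro u _
    have hlin : HasDerivAt (fun u : ℂ => w * (1 - u)) (-w) u := by
      simpa using ((hasDerivAt_id (u : ℂ)).const_sub 1).const_mul w
    have hexp : HasDerivAt (fun u : ℂ => exp (w * u)) (exp (w * u) * w) u := by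
      simpa [mul_comm] using ((hasDerivAt_id (u : ℂ)).const_mul w).cexp
    refine (hexp.mul ((hasDerivAt_sum_range_pow_div_factorial n _).comp _ hlin)).comp_ofReal
      |>.congr_deriv ?_
    simp only [Function.comp_apply, mul_pow]
    ring
  rw [← intervalIntegral.integral_const_mul, intervalIntegral.integral_eq_sub_of_hasDerivAt hderiv
    (by apply Continuous.intervalIntegrable; fun_prop)]
  simp [sum_range_succ']

theorem min_re_le_re_one_add_sub_one_mul (s : ℂ) {u : ℝ} (h0 : 0 ≤ u) (h1 : u ≤ 1) :
    min s.re 1 ≤ (1 + (s - 1) * u).re := by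
  have : (1 + (s - 1) * u).re = (1 - u) * 1 + u * s.re := by
    simp only [Complex.add_re, Complex.one_re, Complex.mul_re, Complex.sub_re, Complex.ofReal_re,
      Complex.sub_im, Complex.one_im, Complex.ofReal_im, sub_zero, mul_zero]
    ring
  rw [this]
  nlinarith [min_le_left s.re 1, min_le_right s.re 1]

theorem hasDerivAt_pow_mul_log_add_sum (m : ℕ) (s : ℂ) {w : ℂ}
    (hw : w ∈ Complex.slitPlane) :
    HasDerivAt (fun w => s ^ m * Complex.log w +
        ∑ j ∈ range m, s ^ (m - 1 - j) * (s - w) ^ (j + 1) / (j + 1))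
      ((s - w) ^ m / w) w := by
  have hsum : HasDerivAt (fun w => ∑ j ∈ range m, s ^ (m - 1 - j) * (s - w) ^ (j + 1) / (j + 1))
      (-∑ j ∈ range m, (s - w) ^ j * s ^ (m - 1 - j)) w := by
    rw [← sum_neg_distrib]
    refine HasDerivAt.fun_sum fun j _ => ?_
    refine ((((hasDerivAt_id w).const_sub s).pow (j + 1)).const_mul _ |>.div_const _).congr_deriv ?_
    simp only [id_eq]
    push_cast
    field_simp
  refine ((Complex.hasDerivAt_log hw).const_mul (s ^ m) |>.add hsum).congr_deriv ?_
  have hw0 : w ≠ 0 := Complex.slitPlane_ne_zero hw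
  have hgeom := geom_sum₂_mul (s - w) s m
  field_simp
  linear_combination hgeom

theorem integral_one_sub_pow_div_one_add_sub_one_mul (m : ℕ) {s : ℂ} (hs : 0 < s.re) :
    (s - 1) ^ (m + 1) * ∫ u in (0 : ℝ)..1, (1 - (u : ℂ)) ^ m / (1 + (s - 1) * u) =
      s ^ m * Complex.log s - ∑ j ∈ range m, s ^ (m - 1 - j) * (s - 1) ^ (j + 1) / (j + 1) := by
  have hre : ∀ u ∈ Set.uIcc (0 : ℝ) 1, 0 < (1 + (s - 1) * u).re := fun u hu => by
    rw [Set.uIcc_of_le zero_le_one] at hu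
    exact (lt_min hs one_pos).trans_le (min_re_le_re_one_add_sub_one_mul s hu.1 hu.2)
  have hderiv : ∀ u ∈ Set.uIcc (0 : ℝ) 1, HasDerivAt
      (fun u : ℝ => s ^ m * Complex.log (1 + (s - 1) * u) +
        ∑ j ∈ range m, s ^ (m - 1 - j) * (s - (1 + (s - 1) * u)) ^ (j + 1) / (j + 1))
      ((s - 1) ^ (m + 1) * ((1 - (u : ℂ)) ^ m / (1 + (s - 1) * u))) u := by
    intro u hu
    have hlin : HasDerivAt (fun u : ℂ => 1 + (s - 1) * u) (s - 1) u := by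
      simpa using ((hasDerivAt_id (u : ℂ)).const_mul (s - 1)).const_add 1
    have hprim := hasDerivAt_pow_mul_log_add_sum m s
      (Complex.mem_slitPlane_iff.mpr (Or.inl (hre u hu)))
    refine (hprim.comp (u : ℂ) (h := fun u : ℂ => 1 + (s - 1) * u) hlin).comp_ofReal
      |>.congr_deriv ?_
    rw [show s - (1 + (s - 1) * u) = (s - 1) * (1 - u) by ring, mul_pow]
    ring
  have hcont :
      ContinuousOn (fun u : ℝ => (1 - (u : ℂ)) ^ m / (1 + (s - 1) * u)) (Set.uIcc 0 1) :=
    ContinuousOn.div (by fun_prop) (by fun_prop) fun u hu h => (hre u hu).ne' (by simp [h])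
  rw [← intervalIntegral.integral_const_mul, intervalIntegral.integral_eq_sub_of_hasDerivAt hderiv
    (hcont.intervalIntegrable.const_mul _)]
  simp

noncomputable def remainderKernel (m : ℕ) (s : ℂ) (t u : ℝ) : ℂ :=
  (1 - (u : ℂ)) ^ m * Complex.exp (-(1 + (s - 1) * u) * t)

theorem norm_remainderKernel_le (m : ℕ) (s : ℂ) {t u : ℝ} (ht : 0 ≤ t)
    (hu : u ∈ Set.Icc (0 : ℝ) 1) :
    ‖remainderKernel m s t u‖ ≤ Real.exp (-min s.re 1 * t) := by
  have h1u : ‖1 - (u : ℂ)‖ ≤ 1 := by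
    rw [← Complex.ofReal_one, ← Complex.ofReal_sub, Complex.norm_real, Real.norm_eq_abs, abs_le]
    constructor <;> linarith [hu.1, hu.2]
  rw [remainderKernel, norm_mul, norm_pow, Complex.norm_exp]
  calc ‖1 - (u : ℂ)‖ ^ m * Real.exp (-(1 + (s - 1) * u) * t).re
      ≤ 1 * Real.exp (-min s.re 1 * t) := by
        gcongr
        · exact pow_le_one₀ (norm_nonneg _) h1u
        · have := min_re_le_re_one_add_sub_one_mul s hu.1 hu.2
          simp only [neg_mul, Complex.neg_re, Complex.mul_re, Complex.ofReal_re,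
            Complex.ofReal_im, mul_zero, sub_zero]
          nlinarith
    _ = Real.exp (-min s.re 1 * t) := one_mul _

theorem integrable_remainderKernel (m : ℕ) {s : ℂ} (hs : 0 < s.re) :
    Integrable (Function.uncurry (remainderKernel m s))
      ((volume.restrict (Set.Ioi 0)).prod (volume.restrict (Set.Ioc 0 1))) := by
  have hexp : Integrable (fun p : ℝ × ℝ => Real.exp (-min s.re 1 * p.1) * 1)
      ((volume.restrict (Set.Ioi 0)).prod (volume.restrict (Set.Ioc 0 1))) :=
    (exp_neg_integrableOn_Ioi 0 (lt_min hs one_pos)).mul_prod (integrable_const 1)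
  refine hexp.mono' (Continuous.aestronglyMeasurable (by unfold remainderKernel; fun_prop)) ?_
  rw [Measure.prod_restrict]
  filter_upwards [ae_restrict_mem (measurableSet_Ioi.prod measurableSet_Ioc)] with p hp
  rw [mul_one]
  exact norm_remainderKernel_le m s hp.1.le (Set.Ioc_subset_Icc_self hp.2)

theorem integral_remainderKernel_Ioi (m : ℕ) {s : ℂ} (hs : 0 < s.re) {u : ℝ}
    (hu : u ∈ Set.Icc (0 : ℝ) 1) :
    ∫ t in Set.Ioi (0 : ℝ), remainderKernel m s t u =
      (1 - (u : ℂ)) ^ m / (1 + (s - 1) * u) := by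
  have hre : (-(1 + (s - 1) * u)).re < 0 := by
    rw [Complex.neg_re, neg_lt_zero]
    exact (lt_min hs one_pos).trans_le (min_re_le_re_one_add_sub_one_mul s hu.1 hu.2)
  simp only [remainderKernel, integral_const_mul, integral_exp_mul_complex_Ioi hre,
    Complex.ofReal_zero, mul_zero, Complex.exp_zero, neg_div_neg_eq, mul_one_div]

theorem eqOn_integral_remainderKernel (m : ℕ) (s : ℂ) :
    Set.EqOn
      (fun t : ℝ => ((t : ℂ) ^ (m + 1))⁻¹ * (Complex.exp (-s * t) -
        (∑ k ∈ range (m + 1), (1 - s) ^ k * (t : ℂ) ^ k / (k ! : ℂ)) * Complex.exp (-t)))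
      (fun t => (1 - s) ^ (m + 1) / m ! * ∫ u in Set.Ioc (0 : ℝ) 1, remainderKernel m s t u)
      (Set.Ioi 0) := by
  intro t ht
  have ht' : (t : ℂ) ≠ 0 := Complex.ofReal_ne_zero.mpr (ne_of_gt ht)
  have htaylor := Complex.exp_sub_sum_range_eq_integral ((1 - s) * t) m
  have hexp : Complex.exp (-s * t) = Complex.exp ((1 - s) * t) * Complex.exp (-t) := by
    rw [← Complex.exp_add]; ring_nf
  have hkernel : ∫ u in Set.Ioc (0 : ℝ) 1, remainderKernel m s t u =
      Complex.exp (-t) *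
        ∫ u in (0 : ℝ)..1, (1 - (u : ℂ)) ^ m * Complex.exp ((1 - s) * t * u) := by
    rw [← intervalIntegral.integral_of_le zero_le_one, ← intervalIntegral.integral_const_mul]
    refine intervalIntegral.integral_congr fun u _ => ?_
    rw [remainderKernel, mul_left_comm, ← Complex.exp_add]
    ring_nf
  simp_rw [hexp, hkernel, ← mul_pow, ← sub_mul, htaylor, mul_pow]
  generalize (∫ u in (0 : ℝ)..1, (1 - (u : ℂ)) ^ m * Complex.exp ((1 - s) * t * u)) = I
  field_simp

theorem statement1 (n : ℕ) (hn : 1 ≤ n) (s : ℂ) (hs : 0 < s.re) :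
    IntegrableOn
      (fun t : ℝ => ((t : ℂ) ^ n)⁻¹ *
        (Complex.exp (-s * t) -
          (∑ k ∈ Finset.range n, (1 - s) ^ k * (t : ℂ) ^ k / (k.factorial : ℂ)) *
            Complex.exp (-t))) (Set.Ioi 0) ∧
    ∫ t in Set.Ioi (0 : ℝ), ((t : ℂ) ^ n)⁻¹ *
        (Complex.exp (-s * t) -
          (∑ k ∈ Finset.range n, (1 - s) ^ k * (t : ℂ) ^ k / (k.factorial : ℂ)) *
            Complex.exp (-t)) =
      (-1) ^ n * (s ^ (n - 1) / (((n - 1).factorial : ℂ)) * Complex.log s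
        + Polynomial.aeval s (B n)) := by
  obtain ⟨m, rfl⟩ : ∃ m, n = m + 1 := ⟨n - 1, by omega⟩
  have hrepr := eqOn_integral_remainderKernel m s
  have hK := integrable_remainderKernel m hs
  refine ⟨IntegrableOn.congr_fun (hK.integral_prod_left.const_mul _) hrepr.symm
    measurableSet_Ioi, ?_⟩
  rw [setIntegral_congr_fun measurableSet_Ioi hrepr, integral_const_mul,
    integral_integral_swap hK, setIntegral_congr_fun measurableSet_Ioc fun u hu =>
      integral_remainderKernel_Ioi m hs (Set.Ioc_subset_Icc_self hu),
    ← intervalIntegral.integral_of_le zero_le_one, Nat.add_sub_cancel, aeval_B_succ,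
    show (1 - s) ^ (m + 1) = (-1) ^ (m + 1) * (s - 1) ^ (m + 1) by rw [← mul_pow]; ring]
  linear_combination
    (-1) ^ (m + 1) / (m ! : ℂ) * integral_one_sub_pow_div_one_add_sub_one_mul m hs
end

section
/- For every integer n ≥ 1, the polynomial B_{n+1} satisfies B_{n+1}(1) = 0 and the recurrence relation B'_{n+1}(s) = B_n(s) - s^{n-1}/n! (equality of polynomials in s, where B'_{n+1} denotes the derivative of B_{n+1}). -/
/-!
Write `B (n + 1) = -(1/n!) Σₙ` with `Σₙ = ∑ₖ binom(n,k) (Hₙ - H_{n-k}) (X - 1)^k`; every term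
vanishes at `X = 1`. Differentiating termwise, `k binom(m+1,k) = (m+1) binom(m,k-1)` and
`H_{m+1} = H_m + 1/(m+1)` give `Σ'_{m+1} = (m+1) Σ_m + ∑ⱼ binom(m,j) (X - 1)^j`, and the last sum
is `X^m` by the binomial theorem.
-/

open Finset Polynomial

noncomputable def harmonicBinomCoeff (n k : ℕ) : ℚ :=
  n.choose k * (harmonic n - harmonic (n - k))

noncomputable def harmonicBinomSum (n : ℕ) : ℚ[X] :=
  ∑ k ∈ range (n + 1), C (harmonicBinomCoeff n k) * (X - 1) ^ k

lemma harmonicBinomCoeff_zero_right (n : ℕ) : harmonicBinomCoeff n 0 = 0 := by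
  simp [harmonicBinomCoeff]

lemma succ_mul_harmonicBinomCoeff_succ (m j : ℕ) :
    (j + 1 : ℚ) * harmonicBinomCoeff (m + 1) (j + 1) =
      (m + 1) * harmonicBinomCoeff m j + m.choose j := by
  have hchoose : (j + 1 : ℚ) * (m + 1).choose (j + 1) = (m + 1) * m.choose j := by
    exact_mod_cast (mul_comm _ _).trans (Nat.add_one_mul_choose_eq m j).symm
  have hm : (m + 1 : ℚ) ≠ 0 := by positivity
  simp only [harmonicBinomCoeff, Nat.add_sub_add_right, harmonic_succ]
  push_cast
  linear_combination (harmonic m - harmonic (m - j) + (m + 1 : ℚ)⁻¹) * hchoose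
    + (m.choose j : ℚ) * mul_inv_cancel₀ hm

lemma sum_choose_mul_sub_one_pow {R : Type*} [CommRing R] (x : R) (m : ℕ) :
    ∑ j ∈ range (m + 1), (m.choose j : R) * (x - 1) ^ j = x ^ m := by
  rw [← sub_add_cancel x 1, add_pow, sub_add_cancel]
  simp [mul_comm]

lemma B_succ (n : ℕ) :
    B (n + 1) = C (-(n.factorial : ℚ)⁻¹) * harmonicBinomSum n := by
  rw [B, harmonicBinomSum, range_eq_Ico, sum_eq_sum_Ico_succ_bot n.succ_pos,
    harmonicBinomCoeff_zero_right, C_0, zero_mul, zero_add, Nat.succ_eq_add_one,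
    Ico_add_one_right_eq_Icc]
  rfl

lemma eval_one_harmonicBinomSum (n : ℕ) : (harmonicBinomSum n).eval 1 = 0 := by
  simp [harmonicBinomSum, eval_finsetSum, sum_range_succ', harmonicBinomCoeff_zero_right]

lemma derivative_harmonicBinomSum_succ (m : ℕ) :
    derivative (harmonicBinomSum (m + 1)) = C (m + 1 : ℚ) * harmonicBinomSum m + X ^ m := by
  have hterm : ∀ j ∈ range (m + 1),
      derivative (C (harmonicBinomCoeff (m + 1) (j + 1)) * (X - 1) ^ (j + 1)) =
        C (m + 1 : ℚ) * (C (harmonicBinomCoeff m j) * (X - 1) ^ j)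
          + C (m.choose j : ℚ) * (X - 1) ^ j := by
    intro j _
    rw [derivative_C_mul, ← C_1, derivative_X_sub_C_pow, C_1, Nat.add_sub_cancel, ← mul_assoc,
      ← C_mul, Nat.cast_succ, mul_comm (harmonicBinomCoeff _ _), succ_mul_harmonicBinomCoeff_succ,
      C_add, C_mul]
    ring
  rw [harmonicBinomSum, sum_range_succ', harmonicBinomCoeff_zero_right, C_0, zero_mul, add_zero,
    derivative_sum, sum_congr rfl hterm, sum_add_distrib, ← mul_sum, ← harmonicBinomSum]
  simp only [C_eq_natCast, sum_choose_mul_sub_one_pow]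

theorem statement2 (n : ℕ) (hn : 1 ≤ n) :
    (B (n + 1)).eval 1 = 0 ∧
    derivative (B (n + 1)) =
      B n - Polynomial.C ((n.factorial : ℚ)⁻¹) * Polynomial.X ^ (n - 1) := by
  refine ⟨by rw [B_succ, eval_mul, eval_one_harmonicBinomSum, mul_zero], ?_⟩
  obtain ⟨m, rfl⟩ := Nat.exists_eq_add_of_le' hn
  have hfac : (-((m + 1).factorial : ℚ)⁻¹) * (m + 1) = -(m.factorial : ℚ)⁻¹ := by
    rw [Nat.factorial_succ]
    push_cast
    field_simp
  rw [B_succ, B_succ, derivative_C_mul, derivative_harmonicBinomSum_succ, Nat.add_sub_cancel,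
    mul_add, ← mul_assoc, ← C_mul, hfac, C_neg, C_neg]
  ring
end

section
/- For every integer n ≥ 1, B_{n+1}(0) = (-1)^{n+1} / (n · n!). Equivalently, -(1/n!) · ∑_{k=1}^{n} binom(n,k) · (H_n - H_{n-k}) · (-1)^k = (-1)^{n+1} / (n · n!). -/
open Finset Polynomial

/-! At `s = 0` the factor `(s - 1)^k` becomes `(-1)^k`. The `k = 0` term of the sum vanishes and
`∑ₖ (-1)^k C(n,k) = 0`, so after `k ↦ n - k` the sum is `-(-1)^n ∑ₖ (-1)^k C(n,k) H_k`.
By Pascal's rule this alternating sum equals `-∑ₖ (-1)^k C(n-1,k) / (k+1)`, and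
`C(n-1,k) / (k+1) = C(n,k+1) / n` turns the latter into `-1/n`. -/

section AlternatingBinomialSums

variable {R K : Type*}

theorem sum_range_neg_one_pow_mul_choose [Ring R] {n : ℕ} (hn : n ≠ 0) :
    ∑ k ∈ range (n + 1), (-1 : R) ^ k * n.choose k = 0 := by
  exact_mod_cast congrArg (Int.cast : ℤ → R) (Int.alternating_sum_range_choose_of_ne hn)

theorem sum_range_neg_one_pow_mul_choose_mul_reflect [CommRing R] (f : ℕ → R) (n : ℕ) :
    ∑ k ∈ range (n + 1), (-1 : R) ^ k * n.choose k * f (n - k)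
      = (-1) ^ n * ∑ k ∈ range (n + 1), (-1 : R) ^ k * n.choose k * f k := by
  rw [← sum_range_reflect, mul_sum]
  refine sum_congr rfl fun k hk => ?_
  have hkn : k ≤ n := Nat.lt_succ_iff.mp (mem_range.mp hk)
  obtain ⟨j, rfl⟩ := Nat.exists_eq_add_of_le hkn
  rw [Nat.add_sub_cancel, Nat.add_sub_cancel_left, Nat.choose_symm_add, Nat.add_sub_cancel,
    pow_add]
  have hsq : (-1 : R) ^ k * (-1) ^ k = 1 := by rw [← mul_pow]; simp
  linear_combination (-(-1 : R) ^ j * (k + j).choose j * f k) * hsq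

theorem sum_range_neg_one_pow_mul_choose_div_succ [Field K] [CharZero K] (n : ℕ) :
    ∑ k ∈ range (n + 1), (-1 : K) ^ k * n.choose k / (k + 1) = 1 / (n + 1) := by
  have hsucc : ∑ k ∈ range (n + 1), (-1 : K) ^ k * (n + 1).choose (k + 1) = 1 := by
    have h := sum_range_neg_one_pow_mul_choose (R := K) n.succ_ne_zero
    rw [sum_range_succ'] at h
    simp only [pow_succ, mul_neg_one, neg_mul, sum_neg_distrib, pow_zero, Nat.choose_zero_right,
      Nat.cast_one, one_mul] at h
    linear_combination -h
  calc ∑ k ∈ range (n + 1), (-1 : K) ^ k * n.choose k / (k + 1)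
      = ∑ k ∈ range (n + 1), (-1 : K) ^ k * (n + 1).choose (k + 1) / (n + 1) := by
        refine sum_congr rfl fun k _ => ?_
        have h : ((n : K) + 1) * n.choose k = (n + 1).choose (k + 1) * (k + 1) := by
          exact_mod_cast Nat.add_one_mul_choose_eq n k
        field_simp
        linear_combination h
    _ = 1 / (n + 1) := by rw [← sum_div, hsucc]

end AlternatingBinomialSums

theorem sum_range_neg_one_pow_mul_choose_mul_harmonic {n : ℕ} (hn : n ≠ 0) :
    ∑ k ∈ range (n + 1), (-1 : ℚ) ^ k * n.choose k * harmonic k = -1 / n := by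
  obtain ⟨m, rfl⟩ := Nat.exists_eq_add_one_of_ne_zero hn
  have h := sum_choose_succ_nsmul (fun i _ => (-1 : ℚ) ^ i * harmonic i) m
  simp only [nsmul_eq_mul, ← sum_add_distrib, ← mul_add] at h
  calc ∑ k ∈ range (m + 1 + 1), (-1 : ℚ) ^ k * (m + 1).choose k * harmonic k
      = ∑ k ∈ range (m + 2), ((m + 1).choose k : ℚ) * ((-1) ^ k * harmonic k) :=
        sum_congr rfl fun _ _ => by ring
    _ = ∑ k ∈ range (m + 1),
          (m.choose k : ℚ) * ((-1) ^ k * harmonic k + (-1) ^ (k + 1) * harmonic (k + 1)) := h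
    _ = -∑ k ∈ range (m + 1), (-1 : ℚ) ^ k * m.choose k / (k + 1) := by
        rw [← sum_neg_distrib]
        refine sum_congr rfl fun k _ => ?_
        rw [harmonic_succ]
        push_cast
        ring
    _ = -1 / ↑(m + 1) := by
        rw [sum_range_neg_one_pow_mul_choose_div_succ]
        push_cast
        ring

theorem sum_Icc_choose_mul_harmonic_sub_mul_neg_one_pow {n : ℕ} (hn : n ≠ 0) :
    ∑ k ∈ Icc 1 n, (n.choose k : ℚ) * (harmonic n - harmonic (n - k)) * (-1) ^ k
      = (-1) ^ n / n := by
  calc ∑ k ∈ Icc 1 n, (n.choose k : ℚ) * (harmonic n - harmonic (n - k)) * (-1) ^ k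
      = ∑ k ∈ range (n + 1), (n.choose k : ℚ) * (harmonic n - harmonic (n - k)) * (-1) ^ k := by
        rw [Nat.range_succ_eq_Icc_zero, ← insert_Icc_add_one_left_eq_Icc (Nat.zero_le n),
          sum_insert (by simp)]
        simp
    _ = harmonic n * ∑ k ∈ range (n + 1), (-1 : ℚ) ^ k * n.choose k
          - ∑ k ∈ range (n + 1), (-1 : ℚ) ^ k * n.choose k * harmonic (n - k) := by
        rw [mul_sum, ← sum_sub_distrib]
        exact sum_congr rfl fun _ _ => by ring
    _ = (-1) ^ n / n := by
        rw [sum_range_neg_one_pow_mul_choose hn, sum_range_neg_one_pow_mul_choose_mul_reflect,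
          sum_range_neg_one_pow_mul_choose_mul_harmonic hn]
        ring

theorem B_succ_eval_zero (n : ℕ) :
    (B (n + 1)).eval 0 = -(n.factorial : ℚ)⁻¹ *
      ∑ k ∈ Icc 1 n, (n.choose k : ℚ) * (harmonic n - harmonic (n - k)) * (-1) ^ k := by
  simp [B, eval_finsetSum]

theorem statement3 (n : ℕ) (hn : 1 ≤ n) :
    (B (n + 1)).eval 0 = (-1) ^ (n + 1) / ((n : ℚ) * n.factorial) ∧
    -(n.factorial : ℚ)⁻¹ *
        ∑ k ∈ Finset.Icc 1 n, (n.choose k : ℚ) * (harmonic n - harmonic (n - k)) * (-1) ^ k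
      = (-1) ^ (n + 1) / ((n : ℚ) * n.factorial) := by
  have hsum : -(n.factorial : ℚ)⁻¹ *
        ∑ k ∈ Finset.Icc 1 n, (n.choose k : ℚ) * (harmonic n - harmonic (n - k)) * (-1) ^ k
      = (-1) ^ (n + 1) / ((n : ℚ) * n.factorial) := by
    rw [sum_Icc_choose_mul_harmonic_sub_mul_neg_one_pow (Nat.one_le_iff_ne_zero.mp hn)]
    field_simp
    ring
  exact ⟨(B_succ_eval_zero n).trans hsum, hsum⟩
end

section
/- log 2 = 2/3 + (3/4) · ∑_{j=1}^∞ (-1)^{j+1} / ( j(j+1)(j+2)(j+3) ), where log denotes the natural logarithm. -/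
open Filter Finset Real Topology

/-- partial sums of the alternating harmonic series -/
noncomputable def altT (N : ℕ) : ℝ := ∑ i ∈ range N, (-1 : ℝ) ^ i / ((i : ℝ) + 1)

lemma altT_two_mul (n : ℕ) : altT (2 * n) = (harmonic (2 * n) : ℝ) - (harmonic n : ℝ) := by
  induction n with
  | zero => simp [altT]
  | succ n ih =>
    have h2 : 2 * (n + 1) = (2 * n + 1) + 1 := by ring
    rw [h2]
    rw [altT, Finset.sum_range_succ, Finset.sum_range_succ, ← altT]
    rw [ih]
    rw [show 2 * n + 1 = 2 * n + 1 from rfl]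
    have e1 : ((-1 : ℝ)) ^ (2 * n) = 1 := by
      simpa using (neg_one_pow_eq_one_iff_even (by norm_num : (-1:ℝ) ≠ 1)).mpr
        (even_two_mul n)
    have e2 : ((-1 : ℝ)) ^ (2 * n + 1) = -1 := by rw [pow_succ, e1]; ring
    rw [harmonic_succ, harmonic_succ, harmonic_succ]
    push_cast
    rw [e1, e2]
    have hn1 : ((n : ℝ) + 1) ≠ 0 := by positivity
    field_simp
    ring

lemma tendsto_altT : Tendsto altT atTop (𝓝 (Real.log 2)) := by
  -- alternating series test: the limit exists
  obtain ⟨l, hl⟩ : ∃ l, Tendsto (fun n ↦ ∑ i ∈ range n, (-1 : ℝ) ^ i * (1 / ((i : ℝ) + 1)))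
      atTop (𝓝 l) := by
    apply Antitone.tendsto_alternating_series_of_tendsto_zero
    · intro a b hab
      have h : (a:ℝ) ≤ b := by exact_mod_cast hab
      exact one_div_le_one_div_of_le (by positivity) (by linarith)
    · exact tendsto_one_div_add_atTop_nhds_zero_nat
  have hT : Tendsto altT atTop (𝓝 l) := by
    refine hl.congr fun n => ?_
    unfold altT
    refine Finset.sum_congr rfl fun i _ => ?_
    ring
  -- identify the limit along even indices
  have h2n : Tendsto (fun n : ℕ ↦ 2 * n) atTop atTop :=
    tendsto_atTop_atTop.mpr fun b => ⟨b, fun a ha => by omega⟩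
  have hsub : Tendsto (fun n ↦ altT (2 * n)) atTop (𝓝 l) := hT.comp h2n
  have hlog : Tendsto (fun n ↦ altT (2 * n)) atTop (𝓝 (Real.log 2)) := by
    have h1 : Tendsto (fun n : ℕ ↦ ((harmonic (2 * n) : ℝ) - Real.log (2 * n))
        - ((harmonic n : ℝ) - Real.log n) + Real.log 2) atTop
        (𝓝 (Real.eulerMascheroniConstant - Real.eulerMascheroniConstant + Real.log 2)) := by
      have hc := Real.tendsto_harmonic_sub_log.comp h2n
      have := (hc.sub Real.tendsto_harmonic_sub_log).add
        (tendsto_const_nhds (x := Real.log 2) (f := atTop))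
      refine this.congr fun n => ?_
      simp only [Function.comp_apply]
      push_cast
      ring
    rw [sub_self, zero_add] at h1
    refine h1.congr' ?_
    filter_upwards [eventually_gt_atTop 0] with n hn
    have hn' : (0:ℝ) < n := by exact_mod_cast hn
    rw [altT_two_mul]
    have : Real.log (2 * n) = Real.log 2 + Real.log n := by
      push_cast
      rw [Real.log_mul (by norm_num) hn'.ne']
    push_cast
    rw [this]
    ring
  exact (tendsto_nhds_unique hsub hlog) ▸ hT

lemma altT_shift_tendsto (k : ℕ) :
    Tendsto (fun n ↦ altT (n + k)) atTop (𝓝 (Real.log 2)) :=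
  tendsto_altT.comp (tendsto_add_atTop_nat k)

/-- the term of our series -/
noncomputable def gg (j : ℕ) : ℝ :=
  (-1 : ℝ) ^ ((j + 1) + 1) / (((j : ℝ) + 1) * ((j : ℝ) + 2) * ((j : ℝ) + 3) * ((j : ℝ) + 4))

lemma gg_partial (N : ℕ) :
    ∑ j ∈ range N, gg j =
      (1/6) * altT N + (1/2) * altT (N + 1) + (1/2) * altT (N + 2)
        + (1/6) * altT (N + 3) - 8/9 := by
  induction N with
  | zero =>
    simp only [range_zero, Finset.sum_empty]
    show (0:ℝ) = _
    norm_num [altT, Finset.sum_range_succ]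
  | succ N ih =>
    rw [Finset.sum_range_succ, ih]
    have hstep : ∀ m : ℕ, altT (m + 1) = altT m + (-1 : ℝ) ^ m / ((m : ℝ) + 1) := by
      intro m
      simp [altT, Finset.sum_range_succ]
    rw [show N + 1 + 1 = N + 1 + 1 from rfl, show N + 1 + 2 = (N + 1 + 1) + 1 from rfl,
      show N + 1 + 3 = ((N + 1 + 1) + 1) + 1 from rfl]
    rw [hstep (N + 1 + 1 + 1), hstep (N + 1 + 1), hstep (N + 1), hstep N]
    have key : (-1:ℝ)^N / (((N:ℝ)+1)*((N:ℝ)+2)*((N:ℝ)+3)*((N:ℝ)+4)) =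
        1/6*((-1:ℝ)^N/((N:ℝ)+1)) - 1/2*((-1:ℝ)^N/((N:ℝ)+2))
          + 1/2*((-1:ℝ)^N/((N:ℝ)+3)) - 1/6*((-1:ℝ)^N/((N:ℝ)+4)) := by
      have h1 : ((N:ℝ) + 1) ≠ 0 := by positivity
      have h2 : ((N:ℝ) + 2) ≠ 0 := by positivity
      have h3 : ((N:ℝ) + 3) ≠ 0 := by positivity
      have h4 : ((N:ℝ) + 4) ≠ 0 := by positivity
      field_simp
      ring
    rw [gg]
    push_cast
    simp only [pow_succ]
    linear_combination key

lemma gg_summable : Summable gg := by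
  apply Summable.of_abs
  have hs : Summable (fun j : ℕ ↦ 1 / ((j : ℝ) + 1) ^ 2) := by
    have h0 : Summable (fun n : ℕ ↦ 1 / (n : ℝ) ^ 2) := by
      simpa using Real.summable_one_div_nat_pow.mpr (by norm_num : 1 < 2)
    have := (summable_nat_add_iff 1).mpr h0
    refine this.congr fun n => ?_
    push_cast
    ring
  refine hs.of_nonneg_of_le (fun j => abs_nonneg _) fun j => ?_
  have hD : (0:ℝ) < ((j : ℝ) + 1) * ((j : ℝ) + 2) * ((j : ℝ) + 3) * ((j : ℝ) + 4) := by positivity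
  rw [gg, abs_div, abs_pow, abs_neg, abs_one, one_pow, abs_of_pos hD]
  rw [div_le_div_iff₀ hD (by positivity)]
  nlinarith [sq_nonneg ((j:ℝ)+1), sq_nonneg (j:ℝ)]

lemma gg_tsum : ∑' j, gg j = (4/3) * Real.log 2 - 8/9 := by
  have h1 : Tendsto (fun N ↦ ∑ j ∈ range N, gg j) atTop (𝓝 (∑' j, gg j)) :=
    gg_summable.hasSum.tendsto_sum_nat
  have h2 : Tendsto (fun N ↦ ∑ j ∈ range N, gg j) atTop (𝓝 ((4/3) * Real.log 2 - 8/9)) := by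
    have := ((((tendsto_altT.const_mul (1/6:ℝ)).add
      ((altT_shift_tendsto 1).const_mul (1/2:ℝ))).add
      ((altT_shift_tendsto 2).const_mul (1/2:ℝ))).add
      ((altT_shift_tendsto 3).const_mul (1/6:ℝ))).sub
      (tendsto_const_nhds (x := (8/9:ℝ)) (f := atTop))
    have heq : (1/6:ℝ) * Real.log 2 + (1/2) * Real.log 2 + (1/2) * Real.log 2
        + (1/6) * Real.log 2 - 8/9 = (4/3) * Real.log 2 - 8/9 := by ring
    rw [heq] at this
    exact this.congr fun N => (gg_partial N).symm
  exact tendsto_nhds_unique h1 h2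

theorem statement9 :
    Real.log 2 = 2 / 3 + (3 / 4) *
      ∑' j : ℕ, (-1 : ℝ) ^ ((j + 1) + 1) /
        (((j : ℝ) + 1) * ((j : ℝ) + 2) * ((j : ℝ) + 3) * ((j : ℝ) + 4)) := by
  have h : ∑' j : ℕ, (-1 : ℝ) ^ ((j + 1) + 1) /
      (((j : ℝ) + 1) * ((j : ℝ) + 2) * ((j : ℝ) + 3) * ((j : ℝ) + 4)) = ∑' j, gg j := rfl
  rw [h, gg_tsum]
  ring
end

section
/- log 2 = 5/6 - 6 · ∑_{j=1}^∞ 1 / ( 2^j · j(j+1)(j+2)(j+3) ), where log denotes the natural logarithm. -/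
/-!
Partial fractions split `1 / ((j+1)(j+2)(j+3)(j+4))` into
`(1/(j+1) - 3/(j+2) + 3/(j+3) - 1/(j+4)) / 6`. Each of the four resulting series
`∑ 2^{-(j+1)} / (j+k+1)` is, up to the factor `2^k` and finitely many terms, a tail of
`log 2 = ∑ 2^{-(n+1)} / (n+1)`; the multiples of `log 2` combine to `-log 2`.
-/

open Real Finset

lemma hasSum_pow_div_add_log_of_abs_lt_one {x : ℝ} (hx : |x| < 1) (k : ℕ) :
    HasSum (fun n : ℕ => x ^ (n + k + 1) / (n + k + 1))
      (-log (1 - x) - ∑ i ∈ range k, x ^ (i + 1) / (i + 1)) := by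
  have h := (hasSum_nat_add_iff' k).mpr (hasSum_pow_div_log_of_abs_lt_one hx)
  simpa only [Nat.cast_add, add_assoc] using h

lemma hasSum_one_div_two_pow_mul_add (k : ℕ) :
    HasSum (fun n : ℕ => 1 / (2 ^ (n + 1) * ((n : ℝ) + k + 1)))
      (2 ^ k * (log 2 - ∑ i ∈ range k, 1 / (2 ^ (i + 1) * ((i : ℝ) + 1)))) := by
  have h := (hasSum_pow_div_add_log_of_abs_lt_one (x := 1 / 2) (by norm_num [abs_of_pos]) k
    ).mul_left (2 ^ k)
  have hlog : -log (1 - 1 / 2 : ℝ) = log 2 := by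
    rw [show (1 - 1 / 2 : ℝ) = 2⁻¹ by norm_num, log_inv, neg_neg]
  have hterm (n : ℕ) : 2 ^ k * ((1 / 2 : ℝ) ^ (n + k + 1) / (n + k + 1)) =
      1 / (2 ^ (n + 1) * ((n : ℝ) + k + 1)) := by
    rw [one_div_pow, show n + k + 1 = n + 1 + k by ring, pow_add]
    field_simp
  rw [funext hterm, hlog] at h
  simpa only [one_div_pow, div_div] using h

lemma one_div_mul_add_one_add_two_add_three_add_four {a : ℝ} (h1 : a + 1 ≠ 0) (h2 : a + 2 ≠ 0)
    (h3 : a + 3 ≠ 0) (h4 : a + 4 ≠ 0) :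
    1 / ((a + 1) * (a + 2) * (a + 3) * (a + 4)) =
      (1 / (a + 1) - 3 / (a + 2) + 3 / (a + 3) - 1 / (a + 4)) / 6 := by
  field_simp
  ring

theorem statement10 :
    Real.log 2 = 5 / 6 - 6 *
      ∑' j : ℕ, 1 /
        ((2 : ℝ) ^ (j + 1) * ((j : ℝ) + 1) * ((j : ℝ) + 2) * ((j : ℝ) + 3) * ((j : ℝ) + 4)) := by
  have hk := hasSum_one_div_two_pow_mul_add
  have hsum :=
    ((((hk 0).sub ((hk 1).mul_left 3)).add ((hk 2).mul_left 3)).sub (hk 3)).div_const 6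
  have hterm (j : ℕ) :
      1 / ((2 : ℝ) ^ (j + 1) * (j + 1) * (j + 2) * (j + 3) * (j + 4)) =
      (1 / (2 ^ (j + 1) * ((j : ℝ) + (0 : ℕ) + 1)) -
        3 * (1 / (2 ^ (j + 1) * ((j : ℝ) + (1 : ℕ) + 1))) +
        3 * (1 / (2 ^ (j + 1) * ((j : ℝ) + (2 : ℕ) + 1))) -
        1 / (2 ^ (j + 1) * ((j : ℝ) + (3 : ℕ) + 1))) / 6 := by
    have hpf := one_div_mul_add_one_add_two_add_three_add_four (a := (j : ℝ))
      (by positivity) (by positivity) (by positivity) (by positivity)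
    calc _ = 1 / 2 ^ (j + 1) * (1 / (((j : ℝ) + 1) * (j + 2) * (j + 3) * (j + 4))) := by
          field_simp
      _ = _ := by
          rw [hpf]
          push_cast
          field_simp
          ring
  rw [(hsum.congr_fun hterm).tsum_eq]
  norm_num [sum_range_succ]
  ring
end

section
/- log 2 = 2/3 + (1/4) · ∑_{k=1}^∞ (1/16^k) · ( 8/(8k) + 4/(8k+2) + 2/(8k+4) + 1/(8k+6) ), where log denotes the natural logarithm. -/
/-!
Expand `log 2 = -log (1 - 1/2) = ∑_{n ≥ 1} 1 / (n 2ⁿ)`. The first three terms add up to `2/3`;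
grouping the remaining ones in blocks of four, `n = 4(k+1) + r` with `r < 4`, the `k`-th block
is exactly `1/4` times the `k`-th summand of the formula.
-/

open Real Finset

theorem HasSum.sum_range_mul_add {α : Type*} [AddCommMonoid α] [TopologicalSpace α]
    [ContinuousAdd α] [RegularSpace α] {f : ℕ → α} {a : α} (h : HasSum f a) (m : ℕ) [NeZero m] :
    HasSum (fun k ↦ ∑ r ∈ range m, f (m * k + r)) a := by
  refine ((Nat.divModEquiv m).symm.hasSum_iff.2 h).prod_fiberwise fun k ↦ ?_
  convert hasSum_fintype fun r : Fin m ↦ f (m * k + r) using 1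
  · ext r
    simp [mul_comm]
  · exact (Fin.sum_univ_eq_sum_range (fun r ↦ f (m * k + r)) m).symm

theorem hasSum_log_two : HasSum (fun n : ℕ ↦ (1 / 2 : ℝ) ^ (n + 1) / (n + 1)) (log 2) := by
  convert hasSum_pow_div_log_of_abs_lt_one (x := 1 / 2) (by norm_num [abs_of_pos]) using 1
  rw [show (1 : ℝ) - 1 / 2 = 2⁻¹ by norm_num, log_inv, neg_neg]

theorem sum_range_four_log_two_series_eq_bbp_term (k : ℕ) :
    ∑ r ∈ range 4, (1 / 2 : ℝ) ^ (4 * k + r + 3 + 1) / ((4 * k + r + 3 : ℕ) + 1) =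
      1 / 4 * (1 / (16 : ℝ) ^ (k + 1) *
        (8 / (8 * ((k : ℝ) + 1)) + 4 / (8 * ((k : ℝ) + 1) + 2)
          + 2 / (8 * ((k : ℝ) + 1) + 4) + 1 / (8 * ((k : ℝ) + 1) + 6))) := by
  have hPow (r : ℕ) : (1 / 2 : ℝ) ^ (4 * k + r + 3 + 1) = 1 / 16 ^ (k + 1) * (1 / 2) ^ r := by
    rw [show 4 * k + r + 3 + 1 = 4 * (k + 1) + r by ring, pow_add, pow_mul]
    norm_num [div_pow]
  simp only [sum_range_succ, sum_range_zero, zero_add, hPow]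
  push_cast
  field_simp
  ring

theorem statement11 :
    Real.log 2 = 2 / 3 + (1 / 4) *
      ∑' k : ℕ, (1 / (16 : ℝ) ^ (k + 1)) *
        (8 / (8 * ((k : ℝ) + 1)) + 4 / (8 * ((k : ℝ) + 1) + 2)
          + 2 / (8 * ((k : ℝ) + 1) + 4) + 1 / (8 * ((k : ℝ) + 1) + 6)) := by
  have hHead : ∑ n ∈ range 3, (1 / 2 : ℝ) ^ (n + 1) / (n + 1) = 2 / 3 := by
    norm_num [sum_range_succ]
  have hTail := (hasSum_nat_add_iff' 3).2 hasSum_log_two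
  rw [hHead] at hTail
  have hBlocks := hTail.sum_range_mul_add 4
  simp only [sum_range_four_log_two_series_eq_bbp_term] at hBlocks
  rw [← tsum_mul_left, hBlocks.tsum_eq]
  ring
end

section
/- (Bailey–Borwein–Plouffe formula) π = ∑_{k=0}^∞ (1/16^k) · ( 4/(8k+1) - 2/(8k+4) - 1/(8k+5) - 1/(8k+6) ). -/
/-!
Since `1 / (8k + j + 1) = ∫₀¹ y ^ (8k + j)`, the `k`-th term is `∫₀¹ (y⁸/16)ᵏ p(y)` with
`p(y) = 4 - 2y³ - y⁴ - y⁵`. On `[0, 1]` the ratio `y⁸/16` is at most `1/16`, so the geometric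
series may be summed under the integral, giving `∫₀¹ p(y) / (1 - y⁸/16)`. This integrand reduces
to `16(1 - y) / ((2 - y²)((y - 1)² + 1))`, whose primitive
`2 log (2 - y²) - 2 log ((y - 1)² + 1) + 4 arctan (y - 1)` increases by `π` over `[0, 1]`.
-/

open Real Set intervalIntegral

theorem hasSum_intervalIntegral_geometric_mul {a b r : ℝ} {q p : ℝ → ℝ}
    (hq : Continuous q) (hp : Continuous p) (hr : r < 1) (hqr : ∀ y ∈ uIcc a b, |q y| ≤ r) :
    HasSum (fun k : ℕ => ∫ y in a..b, q y ^ k * p y) (∫ y in a..b, p y / (1 - q y)) := by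
  let K : TopologicalSpace.Compacts ℝ := ⟨uIcc a b, isCompact_uIcc⟩
  let f : ℕ → C(ℝ, ℝ) := fun k => ⟨fun y => q y ^ k * p y, by fun_prop⟩
  have hr₀ : 0 ≤ r := (abs_nonneg _).trans (hqr a left_mem_uIcc)
  have hbound : ∀ k, ‖(f k).restrict K‖ ≤ r ^ k * ‖(⟨p, hp⟩ : C(ℝ, ℝ)).restrict K‖ := by
    intro k
    refine (ContinuousMap.norm_le _ (by positivity)).2 fun y => ?_
    have hpy := ContinuousMap.norm_coe_le_norm ((⟨p, hp⟩ : C(ℝ, ℝ)).restrict K) y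
    simp only [ContinuousMap.restrict_apply, ContinuousMap.coe_mk, f, norm_mul, norm_pow] at hpy ⊢
    exact mul_le_mul (pow_le_pow_left₀ (norm_nonneg _) (hqr y y.2) k) hpy (norm_nonneg _)
      (by positivity)
  have hsum : Summable fun k => ‖(f k).restrict K‖ :=
    .of_nonneg_of_le (fun _ => norm_nonneg _) hbound
      ((summable_geometric_of_lt_one hr₀ hr).mul_right _)
  have htsum : ∀ y ∈ uIcc a b, ∑' k, f k y = p y / (1 - q y) := fun y hy => by
    simp only [f, ContinuousMap.coe_mk, tsum_mul_right,
      tsum_geometric_of_abs_lt_one ((hqr y hy).trans_lt hr)]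
    ring
  have H := hasSum_intervalIntegral_of_summable_norm hsum
  rw [integral_congr htsum] at H
  exact H

theorem integral_bbp_term (k : ℕ) :
    ∫ y in (0 : ℝ)..1, (y ^ 8 / 16) ^ k * (4 - 2 * y ^ 3 - y ^ 4 - y ^ 5) =
      (1 / (16 : ℝ) ^ k) * (4 / (8 * (k : ℝ) + 1) - 2 / (8 * (k : ℝ) + 4)
        - 1 / (8 * (k : ℝ) + 5) - 1 / (8 * (k : ℝ) + 6)) := by
  have hexpand : ∀ y : ℝ, (y ^ 8 / 16) ^ k * (4 - 2 * y ^ 3 - y ^ 4 - y ^ 5) =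
      1 / 16 ^ k * (4 * y ^ (8 * k) - 2 * y ^ (8 * k + 3) - y ^ (8 * k + 4) - y ^ (8 * k + 5)) := by
    intro y
    rw [div_pow, ← pow_mul]
    ring
  simp only [hexpand]
  rw [integral_const_mul, integral_sub, integral_sub, integral_sub, integral_const_mul,
    integral_const_mul]
  · simp only [integral_pow]
    push_cast
    ring
  all_goals exact (by fun_prop : Continuous _).intervalIntegrable _ _

theorem hasDerivAt_bbp_primitive {y : ℝ} (hy : y ^ 2 < 2) :
    HasDerivAt (fun y => 2 * log (2 - y ^ 2) - 2 * log ((y - 1) ^ 2 + 1) + 4 * arctan (y - 1))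
      (16 * (1 - y) / ((2 - y ^ 2) * ((y - 1) ^ 2 + 1))) y := by
  have h1 : 2 - y ^ 2 ≠ 0 := by linarith
  have h2 : (y - 1) ^ 2 + 1 ≠ 0 := by positivity
  have d1 : HasDerivAt (fun y : ℝ => 2 - y ^ 2) (-(2 * y)) y := by
    simpa using (hasDerivAt_pow 2 y).const_sub 2
  have d2 : HasDerivAt (fun y : ℝ => (y - 1) ^ 2 + 1) (2 * (y - 1)) y := by
    simpa using (((hasDerivAt_id' y).sub_const 1).pow 2).add_const 1
  have d3 := ((hasDerivAt_id' y).sub_const 1).arctan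
  refine ((((d1.log h1).const_mul 2).sub ((d2.log h2).const_mul 2)).add
    (d3.const_mul 4)).congr_deriv ?_
  field_simp
  ring

-- `16 - y⁸ = (2 - y²)(2 + y²)((y - 1)² + 1)((y + 1)² + 1)` and
-- `p(y) = (1 - y)(2 + y²)((y + 1)² + 1)`.
theorem bbp_kernel_eq {y : ℝ} (hy : y ^ 2 < 2) :
    (4 - 2 * y ^ 3 - y ^ 4 - y ^ 5) / (1 - y ^ 8 / 16) =
      16 * (1 - y) / ((2 - y ^ 2) * ((y - 1) ^ 2 + 1)) := by
  have h1 : 0 < 2 - y ^ 2 := by linarith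
  have hy8 : y ^ 8 < 16 := by nlinarith [pow_lt_pow_left₀ hy (sq_nonneg y) (by norm_num : 4 ≠ 0)]
  rw [div_eq_div_iff (by linarith) (by positivity)]
  ring

theorem integral_bbp_kernel_eq_pi :
    ∫ y in (0 : ℝ)..1, (4 - 2 * y ^ 3 - y ^ 4 - y ^ 5) / (1 - y ^ 8 / 16) = π := by
  have hsq : ∀ y ∈ uIcc (0 : ℝ) 1, y ^ 2 < 2 := fun y hy => by
    rw [uIcc_of_le zero_le_one] at hy
    nlinarith [hy.1, hy.2]
  rw [integral_congr fun y hy => bbp_kernel_eq (hsq y hy),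
    integral_eq_sub_of_hasDerivAt (fun y hy => hasDerivAt_bbp_primitive (hsq y hy))]
  · norm_num [arctan_neg, arctan_one]
    ring
  · refine ContinuousOn.intervalIntegrable (ContinuousOn.div (by fun_prop) (by fun_prop) ?_)
    intro y hy
    have hy2 := hsq y hy
    exact mul_ne_zero (by linarith) (by positivity)

theorem statement14 :
    HasSum (fun k : ℕ => (1 / (16 : ℝ) ^ k) *
      (4 / (8 * (k : ℝ) + 1) - 2 / (8 * (k : ℝ) + 4)
        - 1 / (8 * (k : ℝ) + 5) - 1 / (8 * (k : ℝ) + 6))) Real.pi := by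
  have hq : ∀ y ∈ uIcc (0 : ℝ) 1, |y ^ 8 / 16| ≤ 1 / 16 := fun y hy => by
    rw [uIcc_of_le zero_le_one] at hy
    rw [abs_of_nonneg (by positivity)]
    have hy8 := pow_le_one₀ hy.1 hy.2 (n := 8)
    linarith
  have H := hasSum_intervalIntegral_geometric_mul (p := fun y => 4 - 2 * y ^ 3 - y ^ 4 - y ^ 5)
    (by fun_prop) (by fun_prop) (by norm_num) hq
  rw [integral_bbp_kernel_eq_pi] at H
  simpa only [integral_bbp_term] using H
end

section
/- (Null BBP formula in base 16) ∑_{k=0}^∞ (1/16^k) · ( -8/(8k+1) + 8/(8k+2) + 4/(8k+3) + 8/(8k+4) + 2/(8k+5) + 2/(8k+6) - 1/(8k+7) ) = 0. -/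
/-!
With `u = 1/√2` and `z = (1 + i)/2 = u·e^{iπ/4}` we have `u⁸ = z⁸ = 1/16`, so the sequence
`c n = Re (8 uⁿ + 8 (-u)ⁿ - 16 zⁿ)` satisfies `c (8k + j) = 16⁻ᵏ c j`, and
`c 0, …, c 7 = 0, -8, 8, 4, 8, 2, 2, -1`. Grouping `∑ c n / n` in blocks of eight therefore
gives the series of the theorem. On the other hand `∑ wⁿ / n = -log (1 - w)`, so taking real parts
`∑ c n / n = -8 log ‖1 - u‖ - 8 log ‖1 + u‖ + 16 log ‖1 - z‖`, which vanishes because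
`‖1 - u‖ ‖1 + u‖ = 1 - u² = 1/2 = ‖1 - z‖²`.
-/

open Complex ComplexConjugate

theorem HasSum.sum_range_blocks {α : Type*} [AddCommMonoid α] [TopologicalSpace α]
    [ContinuousAdd α] [RegularSpace α] {f : ℕ → α} {a : α} (m : ℕ) [NeZero m]
    (hf : HasSum f a) : HasSum (fun k => ∑ j ∈ Finset.range m, f (m * k + j)) a := by
  refine ((Nat.divModEquiv m).symm.hasSum_iff.mpr hf).prod_fiberwise fun k => ?_
  simpa only [Function.comp_apply, Nat.divModEquiv_symm_apply, mul_comm m k, Finset.sum_range]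
    using hasSum_fintype (fun j : Fin m => f (k * m + j))

theorem Complex.hasSum_re_pow_div {w : ℂ} (hw : ‖w‖ < 1) :
    HasSum (fun n : ℕ => (w ^ n).re / n) (-Real.log ‖1 - w‖) := by
  simpa only [div_natCast_re, neg_re, log_re] using hasSum_re (hasSum_taylorSeries_neg_log hw)

namespace NullBBP

noncomputable def u : ℂ := (√2 / 2 : ℝ)

noncomputable def z : ℂ := (1 + I) / 2

noncomputable def coeff (n : ℕ) : ℝ := (8 * u ^ n + 8 * (-u) ^ n - 16 * z ^ n).re

lemma u_sq : u ^ 2 = 1 / 2 := by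
  rw [u, ← ofReal_pow, div_pow, Real.sq_sqrt zero_le_two]
  norm_num

lemma z_sq : z ^ 2 = I / 2 := by
  rw [z]
  linear_combination (1 / 4 : ℂ) * I_sq

lemma one_sub_z : 1 - z = conj z := by
  rw [z, map_div₀, map_add, map_one, conj_I, map_ofNat]
  ring

lemma norm_z_sq : ‖z‖ ^ 2 = 1 / 2 := by
  rw [Complex.sq_norm, z]
  norm_num [normSq_apply]

lemma norm_u_lt_one : ‖u‖ < 1 := by
  rw [u, norm_real, Real.norm_of_nonneg (by positivity)]
  nlinarith [Real.sq_sqrt (zero_le_two (α := ℝ)), Real.sqrt_nonneg 2]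

lemma norm_z_lt_one : ‖z‖ < 1 := by
  nlinarith [norm_nonneg z, norm_z_sq]

lemma coeff_eight_mul_add (k j : ℕ) : coeff (8 * k + j) = (1 / 16) ^ k * coeff j := by
  have hu : u ^ 8 = 1 / 16 := by
    rw [show u ^ 8 = (u ^ 2) ^ 4 by ring, u_sq]
    norm_num
  have hnegu : (-u) ^ 8 = 1 / 16 := by rw [Even.neg_pow (by decide), hu]
  have hz : z ^ 8 = 1 / 16 := by
    rw [show z ^ 8 = (z ^ 2) ^ 4 by ring, z_sq, div_pow, I_pow_four]
    norm_num
  simp only [coeff, pow_add, pow_mul, hu, hnegu, hz]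
  rw [← re_ofReal_mul]
  congr 1
  push_cast
  ring

lemma coeff_values :
    coeff 0 = 0 ∧ coeff 1 = -8 ∧ coeff 2 = 8 ∧ coeff 3 = 4 ∧
      coeff 4 = 8 ∧ coeff 5 = 2 ∧ coeff 6 = 2 ∧ coeff 7 = -1 := by
  norm_num [coeff, pow_succ, z, u]
  ring_nf
  norm_num [show √2 ^ 4 = (√2 ^ 2) ^ 2 by ring, show √2 ^ 6 = (√2 ^ 2) ^ 3 by ring]

lemma log_norm_one_sub_u_add_log_norm_one_add_u :
    Real.log ‖1 - u‖ + Real.log ‖1 + u‖ = 2 * Real.log ‖1 - z‖ := by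
  have hu : ‖1 - u‖ * ‖1 + u‖ = 1 / 2 := by
    rw [← norm_mul, show (1 - u) * (1 + u) = 1 - u ^ 2 by ring, u_sq]
    norm_num
  have hne : ‖1 - u‖ * ‖1 + u‖ ≠ 0 := by rw [hu]; norm_num
  rw [← Real.log_mul (left_ne_zero_of_mul hne) (right_ne_zero_of_mul hne), hu, one_sub_z,
    norm_conj, ← norm_z_sq, Real.log_pow, Nat.cast_ofNat]

lemma hasSum_coeff_div : HasSum (fun n : ℕ => coeff n / n) 0 := by
  have hsum := (((hasSum_re_pow_div norm_u_lt_one).mul_left 8).add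
    ((hasSum_re_pow_div (w := -u) (by rw [norm_neg]; exact norm_u_lt_one)).mul_left 8)).sub
    ((hasSum_re_pow_div norm_z_lt_one).mul_left 16)
  have hval : 8 * -Real.log ‖1 - u‖ + 8 * -Real.log ‖1 + u‖ - 16 * -Real.log ‖1 - z‖ = 0 := by
    linarith [log_norm_one_sub_u_add_log_norm_one_add_u]
  rw [sub_neg_eq_add, hval] at hsum
  refine hsum.congr_fun fun n => ?_
  simp only [coeff, sub_re, add_re, mul_re, re_ofNat, im_ofNat, zero_mul, sub_zero]
  ring

end NullBBP

theorem statement15 :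
    HasSum (fun k : ℕ => (1 / (16 : ℝ) ^ k) *
      (-8 / (8 * (k : ℝ) + 1) + 8 / (8 * (k : ℝ) + 2) + 4 / (8 * (k : ℝ) + 3)
        + 8 / (8 * (k : ℝ) + 4) + 2 / (8 * (k : ℝ) + 5) + 2 / (8 * (k : ℝ) + 6)
        - 1 / (8 * (k : ℝ) + 7))) 0 := by
  convert NullBBP.hasSum_coeff_div.sum_range_blocks 8 using 2 with k
  obtain ⟨h0, h1, h2, h3, h4, h5, h6, h7⟩ := NullBBP.coeff_values
  simp only [Finset.sum_range_succ, Finset.sum_range_zero, NullBBP.coeff_eight_mul_add, div_pow,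
    one_pow, h0, h1, h2, h3, h4, h5, h6, h7]
  push_cast
  ring
end

section
/- (Null BBP formula in base 2^6) ∑_{k=0}^∞ (1/2^{6k}) · ( 16/(6k+1) - 24/(6k+2) - 8/(6k+3) - 6/(6k+4) + 1/(6k+5) ) = 0. -/
open Real

noncomputable def F : ℕ → ℝ := fun n =>
  (-32) * (((1:ℝ)/2) ^ (n+1) / (n+1)) + (-64) * (((-1:ℝ)/2) ^ (n+1) / (n+1))
    + (if (n+1) % 3 = 0 then (96:ℝ) * (((-1:ℝ)/2) ^ (n+1) / (n+1)) else 0)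

theorem hF : HasSum F 0 := by
  have hA := Real.hasSum_pow_div_log_of_abs_lt_one (x := (1:ℝ)/2)
    (abs_lt.2 ⟨by norm_num, by norm_num⟩)
  have hB := Real.hasSum_pow_div_log_of_abs_lt_one (x := (-1:ℝ)/2)
    (abs_lt.2 ⟨by norm_num, by norm_num⟩)
  have hC := Real.hasSum_pow_div_log_of_abs_lt_one (x := (-1:ℝ)/8)
    (abs_lt.2 ⟨by norm_num, by norm_num⟩)
  have hG := (hA.mul_left (-32)).add (hB.mul_left (-64))
  -- H part
  have hg : Function.Injective (fun m : ℕ => 3 * m + 2) := by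
    intro a b h; simp only [] at h; omega
  have hH : HasSum (fun n : ℕ =>
      (if (n+1) % 3 = 0 then (96:ℝ) * (((-1:ℝ)/2) ^ (n+1) / (n+1)) else 0))
      (32 * -log (1 - (-1/8))) := by
    rw [← Function.Injective.hasSum_iff hg ?_]
    · have : ((fun n : ℕ =>
          (if (n+1) % 3 = 0 then (96:ℝ) * (((-1:ℝ)/2) ^ (n+1) / (n+1)) else 0))
          ∘ (fun m : ℕ => 3 * m + 2))
          = fun m : ℕ => 32 * (((-1:ℝ)/8) ^ (m+1) / (m+1)) := by
        funext m
        simp only [Function.comp_apply]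
        rw [if_pos (by omega)]
        have h1 : 3 * m + 2 + 1 = 3 * (m + 1) := by ring
        rw [h1]
        have h2 : ((-1:ℝ)/2) ^ (3 * (m+1)) = ((-1:ℝ)/8) ^ (m+1) := by
          rw [pow_mul]; norm_num
        rw [h2]
        push_cast
        have h3 : (m:ℝ) + 1 ≠ 0 := by positivity
        field_simp
        ring
      rw [this]
      exact hC.mul_left 32
    · intro n hn
      rw [if_neg]
      intro h
      apply hn
      refine ⟨n / 3, ?_⟩
      simp only []
      omega
  have hT := hG.add hH
  have hval : (-32 * -log (1 - 1/2) + -64 * -log (1 - (-1)/2)) + 32 * -log (1 - (-1/8)) = 0 := by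
    have h1 : (1:ℝ) - 1/2 = 1/2 := by norm_num
    have h2 : (1:ℝ) - (-1)/2 = 3/2 := by norm_num
    have h3 : (1:ℝ) - (-1/8) = 9/8 := by norm_num
    rw [h1, h2, h3]
    rw [show (1:ℝ)/2 = 2⁻¹ by norm_num, Real.log_inv]
    rw [show (3:ℝ)/2 = 3/2 by norm_num, Real.log_div (by norm_num) (by norm_num)]
    rw [show (9:ℝ)/8 = 3^2/2^3 by norm_num, Real.log_div (by positivity) (by positivity),
      Real.log_pow, Real.log_pow]
    push_cast
    ring
  rw [hval] at hT
  exact hT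


set_option maxHeartbeats 2000000 in
theorem statement16 :
    HasSum (fun k : ℕ => (1 / (2 : ℝ) ^ (6 * k)) *
      (16 / (6 * (k : ℝ) + 1) - 24 / (6 * (k : ℝ) + 2) - 8 / (6 * (k : ℝ) + 3)
        - 6 / (6 * (k : ℝ) + 4) + 1 / (6 * (k : ℝ) + 5))) 0 := by
  have h := ((Nat.divModEquiv 6).symm.hasSum_iff).mpr hF
  have h2 : HasSum (fun k : ℕ => ∑ i : Fin 6, F (k * 6 + (i : ℕ))) 0 :=
    h.prod_fiberwise (fun k => hasSum_fintype _)
  convert h2 using 1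
  funext k
  rw [Fin.sum_univ_six]
  simp only [F, Fin.val_zero, Fin.val_one, Fin.val_two]
  norm_num
  rw [if_neg (by omega), if_neg (by omega), if_pos (by omega), if_neg (by omega),
    if_neg (by omega), if_pos (by omega)]
  have hpos1 : (((1:ℝ))/2) ^ (k*6) = ((2:ℝ)^(6*k))⁻¹ := by
    rw [mul_comm k 6, one_div, inv_pow]
  have hneg1 : (-((1:ℝ)/2)) ^ (k*6) = ((2:ℝ)^(6*k))⁻¹ := by
    rw [neg_pow, Even.neg_one_pow ⟨3*k, by ring⟩, one_mul, mul_comm k 6, one_div, inv_pow]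
  simp only [pow_add, hpos1, hneg1]
  push_cast
  have K0 : (0:ℝ) ≤ (k:ℝ) := Nat.cast_nonneg k
  have p0 : ((2:ℝ)^(6*k)) ≠ 0 := by positivity
  have d1 : (k:ℝ)*6+1 ≠ 0 := by positivity
  have d2 : (k:ℝ)*6+1+1 ≠ 0 := by positivity
  have d3 : (k:ℝ)*6+2+1 ≠ 0 := by positivity
  have d4 : (k:ℝ)*6+3+1 ≠ 0 := by positivity
  have d5 : (k:ℝ)*6+4+1 ≠ 0 := by positivity
  have d6 : (k:ℝ)*6+5+1 ≠ 0 := by positivity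
  have e1 : 6*(k:ℝ)+1 ≠ 0 := by positivity
  have e2 : 6*(k:ℝ)+2 ≠ 0 := by positivity
  have e3 : 6*(k:ℝ)+3 ≠ 0 := by positivity
  have e4 : 6*(k:ℝ)+4 ≠ 0 := by positivity
  have e5 : 6*(k:ℝ)+5 ≠ 0 := by positivity
  field_simp
  ring
end

section
/- (Bellard's formula) π = (1/2^6) · ∑_{k=0}^∞ ((-1)^k / 2^{10k}) · ( -2^5/(4k+1) - 1/(4k+3) + 2^8/(10k+1) - 2^6/(10k+3) - 2^2/(10k+5) - 2^2/(10k+7) + 1/(10k+9) ). -/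
/-
Bellard's series is a linear combination of three arctangent series, each regrouped into blocks
so that the common ratio becomes `-1/1024`: the series of `arctan (1/2)` in blocks of five terms
(giving the denominators `10k + j`), that of `arctan w + arctan w̄` for `w = (1 + i)/8` in blocks
of two (`w⁴ = -1/1024`, giving `4k + 1`, `4k + 3`), and that of `arctan (1/32)` (adjusting the
`10k + 5` term). Since `arctan w + arctan w̄ = arctan (8/31)`, the formula reduces to the
Machin-type identity `4 arctan (1/2) - arctan (1/32) - arctan (8/31) = π/2`.
-/

open Finset Real

theorem HasSum.sum_fin_blocks {M : Type*} [AddCommMonoid M] [TopologicalSpace M]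
    [ContinuousAdd M] [RegularSpace M] {f : ℕ → M} {a : M} (hf : HasSum f a)
    (m : ℕ) [NeZero m] : HasSum (fun k ↦ ∑ r : Fin m, f (m * k + r)) a := by
  refine ((Nat.divModEquiv m).symm.hasSum_iff.mpr hf).prod_fiberwise fun k ↦ ?_
  convert hasSum_fintype _ using 2 with r
  simp [mul_comm m k]

namespace Complex

theorem hasSum_arctan_blocks {z : ℂ} (hz : ‖z‖ < 1) (m : ℕ) [NeZero m] :
    HasSum (fun k : ℕ ↦ ((-z ^ 2) ^ m) ^ k *
      ∑ r : Fin m, z * (-z ^ 2) ^ (r : ℕ) / (2 * (m * k + r) + 1)) (arctan z) := by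
  convert (hasSum_arctan hz).sum_fin_blocks m using 2 with k
  rw [mul_sum]
  refine sum_congr rfl fun r _ ↦ ?_
  have h (n : ℕ) : (-1 : ℂ) ^ n * z ^ (2 * n + 1) = z * (-z ^ 2) ^ n := by
    rw [neg_pow, pow_succ, pow_mul]; ring
  push_cast
  rw [h, pow_add, pow_mul]
  ring

theorem re_one_add_div_one_sub_pos {v : ℂ} (hv : ‖v‖ < 1) : 0 < ((1 + v) / (1 - v)).re := by
  have hv' : v.re ^ 2 + v.im ^ 2 < 1 := by
    have := sq_lt_one_iff₀ (norm_nonneg v) |>.mpr hv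
    rwa [Complex.sq_norm, normSq_apply, ← sq, ← sq] at this
  have hne : 1 - v ≠ 0 := fun h ↦ by
    rw [sub_eq_zero] at h; simp [← h] at hv
  rw [div_re, ← add_div]
  apply div_pos
  · simp only [add_re, one_re, sub_re, add_im, one_im, sub_im]; nlinarith
  · exact normSq_pos.mpr hne

theorem arctan_add {z₁ z₂ : ℂ} (h₁ : ‖z₁‖ < 1) (h₂ : ‖z₂‖ < 1) :
    arctan z₁ + arctan z₂ = arctan ((z₁ + z₂) / (1 - z₁ * z₂)) := by
  -- Both `(1 + zⱼ I) / (1 - zⱼ I)` lie in the right half-plane, so their logarithms add.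
  have hre {z : ℂ} (hz : ‖z‖ < 1) : 0 < ((1 + z * I) / (1 - z * I)).re :=
    re_one_add_div_one_sub_pos (by simpa)
  have harg {z : ℂ} (hz : ‖z‖ < 1) : |arg ((1 + z * I) / (1 - z * I))| < π / 2 :=
    abs_arg_lt_pi_div_two_iff.mpr (.inl (hre hz))
  have hne {z : ℂ} (hz : ‖z‖ < 1) : (1 + z * I) / (1 - z * I) ≠ 0 := fun h ↦ by
    simpa [h] using hre hz
  have hsub {w : ℂ} (hw : ‖w‖ < 1) : 1 - w ≠ 0 := fun h ↦ by
    rw [sub_eq_zero] at h; simp [← h] at hw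
  have hd₁ := hsub (w := z₁ * I) (by simpa)
  have hd₂ := hsub (w := z₂ * I) (by simpa)
  have hd := hsub (w := z₁ * z₂) (by rw [norm_mul]; nlinarith [norm_nonneg z₁, norm_nonneg z₂])
  have hprod : (1 + z₁ * I) / (1 - z₁ * I) * ((1 + z₂ * I) / (1 - z₂ * I)) =
      (1 + (z₁ + z₂) / (1 - z₁ * z₂) * I) / (1 - (z₁ + z₂) / (1 - z₁ * z₂) * I) := by
    have hnum : 1 + (z₁ + z₂) / (1 - z₁ * z₂) * I =
        (1 + z₁ * I) * (1 + z₂ * I) / (1 - z₁ * z₂) := by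
      field_simp; linear_combination (-z₁ * z₂) * I_sq
    have hden : 1 - (z₁ + z₂) / (1 - z₁ * z₂) * I =
        (1 - z₁ * I) * (1 - z₂ * I) / (1 - z₁ * z₂) := by
      field_simp; linear_combination (-z₁ * z₂) * I_sq
    rw [hnum, hden, div_div_div_cancel_right₀ hd, div_mul_div_comm]
  have hlog := (log_mul_eq_add_log_iff (hne h₁) (hne h₂)).mpr <| by
    have := abs_lt.mp (harg h₁); have := abs_lt.mp (harg h₂)
    constructor <;> linarith [pi_pos]
  simp only [arctan]
  rw [← hprod, hlog]
  ring

end Complex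

theorem Real.hasSum_arctan_blocks {x : ℝ} (hx : |x| < 1) (m : ℕ) [NeZero m] :
    HasSum (fun k : ℕ ↦ ((-x ^ 2) ^ m) ^ k *
      ∑ r : Fin m, x * (-x ^ 2) ^ (r : ℕ) / (2 * (m * k + r) + 1)) (arctan x) := by
  rw [← Complex.hasSum_ofReal]
  exact_mod_cast Complex.hasSum_arctan_blocks (z := x) (by simpa) m

theorem hasSum_arctan_one_half :
    HasSum (fun k : ℕ ↦ (-1 / 1024 : ℝ) ^ k * (1 / 2 / (10 * k + 1) - 1 / 8 / (10 * k + 3)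
      + 1 / 32 / (10 * k + 5) - 1 / 128 / (10 * k + 7) + 1 / 512 / (10 * k + 9)))
      (arctan (1 / 2)) := by
  convert Real.hasSum_arctan_blocks (x := 1 / 2) (by norm_num [abs_of_pos]) 5 using 2 with k
  simp only [Fin.sum_univ_five]
  norm_num
  ring

theorem hasSum_arctan_one_div_32 :
    HasSum (fun k : ℕ ↦ (-1 / 1024 : ℝ) ^ k * (1 / 32 / (2 * k + 1))) (arctan (1 / 32)) := by
  convert Real.hasSum_arctan_blocks (x := 1 / 32) (by norm_num [abs_of_pos]) 1 using 2 with k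
  norm_num

theorem hasSum_arctan_eight_div_31 :
    HasSum (fun k : ℕ ↦ (-1 / 1024 : ℝ) ^ k * (1 / 4 / (4 * k + 1) + 1 / 128 / (4 * k + 3)))
      (arctan (8 / 31)) := by
  open Complex in
  have hw : ‖(1 + I) / 8‖ < 1 := by
    have := norm_add_le 1 I
    rw [norm_div]; norm_num at *; linarith
  have hw' : ‖(1 - I) / 8‖ < 1 := by
    have := norm_sub_le 1 I
    rw [norm_div]; norm_num at *; linarith
  have key := (Complex.hasSum_arctan_blocks hw 2).add (Complex.hasSum_arctan_blocks hw' 2)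
  rw [Complex.arctan_add hw hw'] at key
  rw [← Complex.hasSum_ofReal]
  convert key using 1
  · funext k
    simp only [Fin.sum_univ_two]
    have h4 : (-((1 + I) / 8) ^ 2) ^ 2 = -1 / 1024 := by
      linear_combination (I ^ 2 + 4 * I + 5) / 4096 * I_sq
    have h4' : (-((1 - I) / 8) ^ 2) ^ 2 = -1 / 1024 := by
      linear_combination (I ^ 2 - 4 * I + 5) / 4096 * I_sq
    rw [h4, h4']
    push_cast
    simp only [Fin.val_zero, Fin.val_one, Nat.cast_zero, Nat.cast_one, pow_zero, pow_one]
    linear_combination (3 / 256 * (-1 / 1024) ^ k / (4 * (k : ℂ) + 3)) * I_sq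
  · rw [Complex.ofReal_arctan]
    congr 1
    have hprod : (1 + I) / 8 * ((1 - I) / 8) = 1 / 32 := by
      linear_combination (-1 : ℂ) / 64 * I_sq
    rw [hprod]
    push_cast
    ring

theorem four_mul_arctan_one_half_sub_arctan_one_div_32_sub_arctan_eight_div_31 :
    4 * arctan (1 / 2) - arctan (1 / 32) - arctan (8 / 31) = π / 2 := by
  -- `2 arctan (1/2) = arctan (4/3)`, `2 arctan (4/3) = π - arctan (24/7)`,
  -- `arctan (24/7) + arctan (1/32) = arctan (31/8) = π/2 - arctan (8/31)`
  have h1 := arctan_add (x := 1 / 2) (y := 1 / 2) (by norm_num)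
  have h2 := arctan_add_eq_add_pi (x := 4 / 3) (y := 4 / 3) (by norm_num) (by norm_num)
  have h3 := arctan_add (x := 24 / 7) (y := 1 / 32) (by norm_num)
  have h4 := arctan_inv_of_pos (x := 31 / 8) (by norm_num)
  norm_num [arctan_neg] at h1 h2 h3 h4
  linarith

noncomputable def bellardTerm (k : ℕ) : ℝ :=
  ((-1 : ℝ) ^ k / (2 : ℝ) ^ (10 * k)) *
      (-(2 : ℝ) ^ 5 / (4 * (k : ℝ) + 1) - 1 / (4 * (k : ℝ) + 3)
        + (2 : ℝ) ^ 8 / (10 * (k : ℝ) + 1) - (2 : ℝ) ^ 6 / (10 * (k : ℝ) + 3)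
        - (2 : ℝ) ^ 2 / (10 * (k : ℝ) + 5) - (2 : ℝ) ^ 2 / (10 * (k : ℝ) + 7)
        + 1 / (10 * (k : ℝ) + 9))

theorem hasSum_bellardTerm : HasSum bellardTerm (2 ^ 6 * π) := by
  have h := ((hasSum_arctan_one_half.mul_left 512).sub
    (hasSum_arctan_one_div_32.mul_left 128)).sub
    (hasSum_arctan_eight_div_31.mul_left 128)
  have hπ : 512 * arctan (1 / 2) - 128 * arctan (1 / 32) - 128 * arctan (8 / 31) = 2 ^ 6 * π := by
    linear_combination
      128 * four_mul_arctan_one_half_sub_arctan_one_div_32_sub_arctan_eight_div_31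
  rw [hπ] at h
  refine h.congr_fun fun k ↦ ?_
  rw [bellardTerm, pow_mul, ← div_pow]
  field_simp
  ring

theorem statement17 :
    Summable (fun k : ℕ => ((-1 : ℝ) ^ k / (2 : ℝ) ^ (10 * k)) *
      (-(2 : ℝ) ^ 5 / (4 * (k : ℝ) + 1) - 1 / (4 * (k : ℝ) + 3)
        + (2 : ℝ) ^ 8 / (10 * (k : ℝ) + 1) - (2 : ℝ) ^ 6 / (10 * (k : ℝ) + 3)
        - (2 : ℝ) ^ 2 / (10 * (k : ℝ) + 5) - (2 : ℝ) ^ 2 / (10 * (k : ℝ) + 7)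
        + 1 / (10 * (k : ℝ) + 9))) ∧
    Real.pi = (1 / 2 ^ 6) *
      ∑' k : ℕ, ((-1 : ℝ) ^ k / (2 : ℝ) ^ (10 * k)) *
        (-(2 : ℝ) ^ 5 / (4 * (k : ℝ) + 1) - 1 / (4 * (k : ℝ) + 3)
          + (2 : ℝ) ^ 8 / (10 * (k : ℝ) + 1) - (2 : ℝ) ^ 6 / (10 * (k : ℝ) + 3)
          - (2 : ℝ) ^ 2 / (10 * (k : ℝ) + 5) - (2 : ℝ) ^ 2 / (10 * (k : ℝ) + 7)
          + 1 / (10 * (k : ℝ) + 9)) := by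
  refine ⟨hasSum_bellardTerm.summable, ?_⟩
  show π = 1 / 2 ^ 6 * ∑' k, bellardTerm k
  rw [hasSum_bellardTerm.tsum_eq]
  ring
end

section
/- For every integer n ≥ 2: if n is even, the polynomial C_n has no real roots; if n is odd, the polynomial C_n has exactly one real root, and this root lies in the open interval (-1, 0). -/
/-!
Write `m = n - 2`. With `L_k(r) = ∑_{j<k} r^(j+1)/(j+1)`, the Taylor polynomial of `-log (1 - r)`,
both `x C_{k+1}(x)` and `(1 + x)^k L_k(x / (1 + x))` satisfy `F_{k+1} = (1 + x) F_k + x^(k+1)/(k+1)`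
(for `C` this is a Pascal rule for `binom(k, j) (H_k - H_{k-j})`), so they agree. As `x = 0, -1` are
never roots, the real roots of `C_{m+2}` correspond under `r = x / (1 + x)` to the nonzero roots of
`L_{m+1}`. Since `L_k' (r) = 1 + r + ⋯ + r^(k-1)`, `L_k` is strictly increasing for odd `k`, hence
vanishes only at `0`; for even `k` it decreases on `(-∞, -1]` and increases on `[-1, ∞)`, so it has
at most one nonzero root. Existence for odd `n` follows from `C_n(-1) = -1/(n-1) < 0 < 1 = C_n(0)`.
-/

open Finset Polynomial

/-- For `n ≥ 2`, the polynomial `C_n ∈ ℚ[x]` of degree `n-2`, defined by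
`C_n(x) = ∑_{k=0}^{n-2} binom(n-1, k+1) (H_{n-1} - H_{n-k-2}) x^k`. -/
noncomputable def Cpoly (n : ℕ) : Polynomial ℚ :=
  ∑ k ∈ Finset.range (n - 1),
    Polynomial.C (((n - 1).choose (k + 1) : ℚ) * (harmonic (n - 1) - harmonic (n - k - 2))) *
      Polynomial.X ^ k

def harmonicBinom (m j : ℕ) : ℚ := m.choose j * (harmonic m - harmonic (m - j))

lemma harmonicBinom_zero_right (m : ℕ) : harmonicBinom m 0 = 0 := by
  simp [harmonicBinom]

lemma harmonicBinom_self_succ (m : ℕ) :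
    harmonicBinom (m + 1) (m + 1) = harmonicBinom m m + (m + 1 : ℚ)⁻¹ := by
  simp [harmonicBinom, harmonic_succ]

lemma harmonicBinom_succ_succ {m j : ℕ} (hj : j < m) :
    harmonicBinom (m + 1) (j + 1) = harmonicBinom m (j + 1) + harmonicBinom m j := by
  obtain ⟨r, rfl⟩ : ∃ r, m = j + r + 1 := ⟨m - j - 1, by omega⟩
  have hpascal : ((j + r + 2).choose (j + 1) : ℚ) =
      (j + r + 1).choose j + (j + r + 1).choose (j + 1) := by
    exact_mod_cast Nat.choose_succ_succ (j + r + 1) j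
  have hratio : ((j + r + 1).choose (j + 1) : ℚ) / (r + 1) =
      (j + r + 2).choose (j + 1) / (j + r + 2) := by
    have := Nat.choose_mul_succ_eq (j + r + 1) (j + 1)
    rw [show j + r + 1 + 1 - (j + 1) = r + 1 by omega] at this
    rw [div_eq_div_iff (by positivity) (by positivity)]
    exact_mod_cast this
  simp only [harmonicBinom, show j + r + 1 + 1 - (j + 1) = r + 1 by omega,
    show j + r + 1 - (j + 1) = r by omega, show j + r + 1 - j = r + 1 by omega,
    harmonic_succ (j + r + 1), harmonic_succ r]
  push_cast
  linear_combination
    (harmonic (j + r + 1) - harmonic r - ((r : ℚ) + 1)⁻¹) * hpascal - hratio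

lemma Cpoly_succ (m : ℕ) :
    Cpoly (m + 1) = ∑ k ∈ range m, C (harmonicBinom m (k + 1)) * X ^ k := by
  unfold Cpoly harmonicBinom
  refine sum_congr (by simp) fun k _ => ?_
  rw [show m + 1 - k - 2 = m - (k + 1) by omega, Nat.add_sub_cancel]

lemma X_mul_Cpoly_succ (m : ℕ) :
    X * Cpoly (m + 1) = ∑ k ∈ range (m + 1), C (harmonicBinom m k) * X ^ k := by
  rw [Cpoly_succ, sum_range_succ', harmonicBinom_zero_right, C_0, zero_mul, add_zero, mul_sum]
  exact sum_congr rfl fun k _ => by ring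

lemma Cpoly_succ_succ (m : ℕ) :
    Cpoly (m + 2) = (1 + X) * Cpoly (m + 1) + C (m + 1 : ℚ)⁻¹ * X ^ m := by
  have hpascal : ∀ k ∈ range m, C (harmonicBinom (m + 1) (k + 1)) * X ^ k =
      C (harmonicBinom m (k + 1)) * X ^ k + C (harmonicBinom m k) * X ^ k := fun k hk => by
    rw [harmonicBinom_succ_succ (mem_range.mp hk), C_add, add_mul]
  rw [Cpoly_succ (m + 1), sum_range_succ, sum_congr rfl hpascal, sum_add_distrib,
    harmonicBinom_self_succ, add_mul, one_mul, X_mul_Cpoly_succ, sum_range_succ, Cpoly_succ, C_add]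
  ring

lemma aeval_neg_one_Cpoly {K : Type*} [Field K] [CharZero K] (m : ℕ) :
    aeval (-1 : K) (Cpoly (m + 2)) = (-1) ^ m / (m + 1) := by
  simp [Cpoly_succ_succ, div_eq_inv_mul]

lemma aeval_zero_Cpoly {K : Type*} [Field K] [CharZero K] (m : ℕ) :
    aeval (0 : K) (Cpoly (m + 2)) = 1 := by
  induction m with
  | zero => simp [Cpoly]
  | succ m ih => rw [Cpoly_succ_succ (m + 1)]; simp [ih]

noncomputable def truncNegLog (m : ℕ) (r : ℝ) : ℝ := ∑ k ∈ range m, r ^ (k + 1) / (k + 1)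

lemma truncNegLog_zero_right (m : ℕ) : truncNegLog m 0 = 0 := by
  simp [truncNegLog]

lemma truncNegLog_succ (m : ℕ) (r : ℝ) :
    truncNegLog (m + 1) r = truncNegLog m r + r ^ (m + 1) / (m + 1) := by
  simp [truncNegLog, sum_range_succ]

lemma hasDerivAt_truncNegLog (m : ℕ) (r : ℝ) :
    HasDerivAt (truncNegLog m) (∑ k ∈ range m, r ^ k) r := by
  unfold truncNegLog
  refine HasDerivAt.fun_sum fun k _ => ?_
  refine ((hasDerivAt_pow (k + 1) r).div_const ((k : ℝ) + 1)).congr_deriv ?_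
  rw [Nat.add_sub_cancel]
  push_cast
  field_simp

lemma continuous_truncNegLog (m : ℕ) : Continuous (truncNegLog m) :=
  continuous_iff_continuousAt.2 fun r => (hasDerivAt_truncNegLog m r).continuousAt

lemma strictMono_truncNegLog {m : ℕ} (hm : Odd m) : StrictMono (truncNegLog m) :=
  strictMono_of_hasDerivAt_pos (hasDerivAt_truncNegLog m) fun _ => hm.geom_sum_pos

lemma strictMonoOn_truncNegLog {m : ℕ} (hm : m ≠ 0) :
    StrictMonoOn (truncNegLog m) (Set.Ici (-1)) := by
  refine strictMonoOn_of_hasDerivWithinAt_pos (convex_Ici _)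
    (continuous_truncNegLog m).continuousOn
    (fun r _ => (hasDerivAt_truncNegLog m r).hasDerivWithinAt) fun r hr => ?_
  rw [interior_Ici, Set.mem_Ioi] at hr
  exact geom_sum_pos' (by linarith) hm

lemma strictAntiOn_truncNegLog {m : ℕ} (hm : Even m) (hm0 : m ≠ 0) :
    StrictAntiOn (truncNegLog m) (Set.Iic (-1)) := by
  refine strictAntiOn_of_hasDerivWithinAt_neg (convex_Iic _)
    (continuous_truncNegLog m).continuousOn
    (fun r _ => (hasDerivAt_truncNegLog m r).hasDerivWithinAt) fun r hr => ?_
  rw [interior_Iic, Set.mem_Iio] at hr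
  exact (geom_sum_neg_iff hm0).2 ⟨hm, by linarith⟩

lemma eq_of_truncNegLog_eq_zero {m : ℕ} (hm : Even m) (hm0 : m ≠ 0) {r s : ℝ}
    (hr0 : r ≠ 0) (hs0 : s ≠ 0) (hr : truncNegLog m r = 0) (hs : truncNegLog m s = 0) :
    r = s := by
  have hle : ∀ t, t ≠ 0 → truncNegLog m t = 0 → t ∈ Set.Iic (-1) := fun t ht0 ht => by
    by_contra hlt
    have hmem : t ∈ Set.Ici (-1) := Set.mem_Ici.2 (not_le.1 hlt).le
    exact ht0 ((strictMonoOn_truncNegLog hm0).injOn hmem (Set.mem_Ici.2 (by norm_num))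
      (ht.trans (truncNegLog_zero_right m).symm))
  exact (strictAntiOn_truncNegLog hm hm0).injOn (hle r hr0 hr) (hle s hs0 hs) (hr.trans hs.symm)

lemma mul_aeval_Cpoly_succ (m : ℕ) {x : ℝ} (hx : 1 + x ≠ 0) :
    x * aeval x (Cpoly (m + 1)) = (1 + x) ^ m * truncNegLog m (x / (1 + x)) := by
  induction m with
  | zero => simp [Cpoly, truncNegLog]
  | succ m ih =>
    calc x * aeval x (Cpoly (m + 2))
        = (1 + x) * (x * aeval x (Cpoly (m + 1))) + x ^ (m + 1) / (m + 1) := by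
          simp only [Cpoly_succ_succ, map_add, map_mul, map_pow, map_one, aeval_X, aeval_C,
            map_inv₀, eq_ratCast]
          push_cast
          ring
      _ = (1 + x) ^ (m + 1) * truncNegLog (m + 1) (x / (1 + x)) := by
          rw [ih, truncNegLog_succ, div_pow]
          field_simp
          ring

lemma truncNegLog_eq_zero_of_aeval_Cpoly_eq_zero {m : ℕ} {x : ℝ}
    (hx : aeval x (Cpoly (m + 2)) = 0) :
    1 + x ≠ 0 ∧ x / (1 + x) ≠ 0 ∧ truncNegLog (m + 1) (x / (1 + x)) = 0 := by
  have hx1 : 1 + x ≠ 0 := fun h => by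
    rw [show x = -1 by linarith, aeval_neg_one_Cpoly] at hx
    exact div_ne_zero (pow_ne_zero _ (by norm_num)) (by positivity) hx
  have hx0 : x ≠ 0 := by
    rintro rfl
    exact one_ne_zero ((aeval_zero_Cpoly m).symm.trans hx)
  have := mul_aeval_Cpoly_succ (m + 1) hx1
  rw [hx, mul_zero, eq_comm] at this
  exact ⟨hx1, div_ne_zero hx0 hx1, (mul_eq_zero.1 this).resolve_left (pow_ne_zero _ hx1)⟩

theorem statement18 (n : ℕ) (hn : 2 ≤ n) :
    (Even n → ∀ x : ℝ, Polynomial.aeval x (Cpoly n) ≠ 0) ∧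
    (Odd n → ∃ x : ℝ, x ∈ Set.Ioo (-1 : ℝ) 0 ∧ Polynomial.aeval x (Cpoly n) = 0 ∧
      ∀ y : ℝ, Polynomial.aeval y (Cpoly n) = 0 → y = x) := by
  obtain ⟨m, rfl⟩ : ∃ m, n = m + 2 := ⟨n - 2, by omega⟩
  refine ⟨fun hn_even x hx => ?_, fun hn_odd => ?_⟩
  · obtain ⟨-, hr0, hr⟩ := truncNegLog_eq_zero_of_aeval_Cpoly_eq_zero hx
    have hodd : Odd (m + 1) := by simpa [parity_simps] using hn_even
    exact hr0 ((strictMono_truncNegLog hodd).injective (hr.trans (truncNegLog_zero_right _).symm))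
  · have hm : Odd m := by simpa [parity_simps] using hn_odd
    have hsign :
        (0 : ℝ) ∈ Set.Ioo (aeval (-1 : ℝ) (Cpoly (m + 2))) (aeval 0 (Cpoly (m + 2))) := by
      rw [aeval_neg_one_Cpoly, aeval_zero_Cpoly, hm.neg_one_pow]
      exact ⟨div_neg_of_neg_of_pos (by norm_num) (by positivity), one_pos⟩
    obtain ⟨x, hx, hroot⟩ := intermediate_value_Ioo (by norm_num)
      (Polynomial.continuous_aeval (Cpoly (m + 2))).continuousOn hsign
    refine ⟨x, hx, hroot, fun y hy => ?_⟩
    obtain ⟨hy1, hy0, hyL⟩ := truncNegLog_eq_zero_of_aeval_Cpoly_eq_zero hy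
    obtain ⟨hx1, hx0, hxL⟩ := truncNegLog_eq_zero_of_aeval_Cpoly_eq_zero hroot
    have hxy := eq_of_truncNegLog_eq_zero (by simpa [parity_simps] using hm) m.succ_ne_zero
      hy0 hx0 hyL hxL
    rw [div_eq_div_iff hy1 hx1] at hxy
    linarith
end

section
/- For every integer n ≥ 2, the polynomial f_n(w) = ∑_{k=1}^{n-1} w^k / k (the (n-1)-th partial sum of the Taylor series of -log(1-w)) has no complex roots in the closed unit disk { w ∈ ℂ : |w| ≤ 1 } other than w = 0. -/
/-!
Eneström–Kakeya argument. Writing `f_n(w) = w · P(w)` with `P(z) = ∑_{j<N} a_j z^j`,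
`a_j = 1/(j+1)` and `N = n - 1`, summation by parts gives
`(1 - z) P(z) = ∑_{i<N} (a_i - a_{i+1}) (1 - z^{i+1}) + a_N (1 - z^N)`.
For `‖z‖ ≤ 1` every `1 - z^k` has nonnegative real part and the weights are nonnegative, so a
root of `P` in the closed disk makes every term vanish; the term `(a_0 - a_1)(1 - z)` forces
`z = 1`, but `P(1) = ∑ a_j > 0`.
-/

open Finset

theorem one_sub_mul_sum_mul_pow {R : Type*} [CommRing R] (a : ℕ → R) (z : R) (N : ℕ) :
    (1 - z) * ∑ j ∈ range N, a j * z ^ j =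
      ∑ i ∈ range N, (a i - a (i + 1)) * (1 - z ^ (i + 1)) + a N * (1 - z ^ N) := by
  induction N with
  | zero => simp
  | succ N ih =>
    rw [sum_range_succ, mul_add, ih, sum_range_succ]
    ring

theorem Complex.re_one_sub_pow_nonneg {z : ℂ} (hz : ‖z‖ ≤ 1) (k : ℕ) : 0 ≤ (1 - z ^ k).re := by
  have : (z ^ k).re ≤ 1 :=
    (re_le_norm _).trans (by simpa only [norm_pow] using pow_le_one₀ (norm_nonneg z) hz)
  simpa using this

theorem Complex.eq_one_of_re_eq_one {z : ℂ} (hz : ‖z‖ ≤ 1) (hre : z.re = 1) : z = 1 := by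
  have hnorm : |z.re| = ‖z‖ := by
    rw [hre, abs_one]
    linarith [re_le_norm z]
  exact Complex.ext hre (abs_re_eq_norm.mp hnorm)

theorem sum_mul_pow_ne_zero_of_antitone {a : ℕ → ℝ} (ha : Antitone a) (h01 : a 1 < a 0)
    {N : ℕ} (hN : 0 < N) (haN : 0 ≤ a N) {z : ℂ} (hz : ‖z‖ ≤ 1) :
    ∑ j ∈ range N, (a j : ℂ) * z ^ j ≠ 0 := by
  intro hroot
  have hid := one_sub_mul_sum_mul_pow (fun j ↦ (a j : ℂ)) z N
  rw [hroot, mul_zero] at hid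
  have hre :
      ∑ i ∈ range N, (a i - a (i + 1)) * (1 - z ^ (i + 1)).re + a N * (1 - z ^ N).re = 0 := by
    simpa only [Complex.zero_re, Complex.add_re, Complex.re_sum, ← Complex.ofReal_sub,
      Complex.re_ofReal_mul] using congrArg Complex.re hid.symm
  have hterm_nonneg : ∀ i ∈ range N, 0 ≤ (a i - a (i + 1)) * (1 - z ^ (i + 1)).re :=
    fun i _ ↦ mul_nonneg (sub_nonneg.mpr (ha i.le_succ)) (Complex.re_one_sub_pow_nonneg hz _)
  have hsum_zero := (add_eq_zero_iff_of_nonneg (sum_nonneg hterm_nonneg)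
    (mul_nonneg haN (Complex.re_one_sub_pow_nonneg hz N))).mp hre |>.1
  have hfirst := (sum_eq_zero_iff_of_nonneg hterm_nonneg).mp hsum_zero 0
    (mem_range.mpr hN)
  have hz1 : z = 1 := by
    refine Complex.eq_one_of_re_eq_one hz ?_
    have := (mul_eq_zero.mp hfirst).resolve_left (sub_ne_zero.mpr h01.ne')
    rw [zero_add, pow_one, Complex.sub_re, Complex.one_re, sub_eq_zero] at this
    exact this.symm
  have hpos : 0 < ∑ j ∈ range N, a j := by
    have hnonneg : ∀ j ∈ range N, 0 ≤ a j := fun j hj ↦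
      haN.trans (ha (mem_range.mp hj).le)
    calc 0 < a 0 := (haN.trans (ha hN)).trans_lt h01
      _ ≤ ∑ j ∈ range N, a j :=
        single_le_sum hnonneg (mem_range.mpr hN)
  have hsum_one : ((∑ j ∈ range N, a j : ℝ) : ℂ) = 0 := by
    push_cast
    simpa [hz1] using hroot
  exact hpos.ne' (Complex.ofReal_eq_zero.mp hsum_one)

theorem statement19 (n : ℕ) (hn : 2 ≤ n) (w : ℂ) (hw : ‖w‖ ≤ 1)
    (h : ∑ k ∈ Finset.Icc 1 (n - 1), w ^ k / (k : ℂ) = 0) : w = 0 := by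
  set a : ℕ → ℝ := fun j ↦ 1 / ((j : ℝ) + 1)
  have ha : StrictAnti a := fun i j hij ↦ by
    simp only [a]
    gcongr
  have hfactor : ∑ k ∈ Icc 1 (n - 1), w ^ k / (k : ℂ) =
      w * ∑ j ∈ range (n - 1), (a j : ℂ) * w ^ j := by
    rw [Icc_sub_one_right_eq_Ico_of_not_isMin (by rw [isMin_iff_eq_bot]; simp; omega),
      sum_Ico_eq_sum_range, mul_sum]
    refine sum_congr rfl fun j _ ↦ ?_
    simp only [a]
    push_cast
    ring
  rw [hfactor] at h
  refine (mul_eq_zero.mp h).resolve_right ?_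
  exact sum_mul_pow_ne_zero_of_antitone ha.antitone (ha zero_lt_one) (by omega)
    (by positivity) hw
end
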